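/- arXiv:math/0411475 — 4 statements merged into one kernel-verified Lean document; each statement's English description precedes it below -/
import Mathlib

section
/- Let L = (Lₙ) be a matrix Lipschitz seminorm on a matrix order unit space (V,1). Then the graded set (L_{D_{Lₙ}}¹), where L_{D_{Lₙ}}¹ = {a ∈ Mₙ(V) : L_{D_{Lₙ}}(a) ≤ 1}, is absolutely matrix convex. -/
/-!
For distinct states `φ, ψ` put `χ = φ - ψ`, so that `⟪φ, a⟫ - ⟪ψ, a⟫ = ⟪χ, a⟫`. Up to a
permutation of indices, `⟪χ, v ⊕ w⟫` is the block diagonal matrix `⟪χ, v⟫ ⊕ ⟪χ, w⟫`, whose operator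
norm is at most the larger of the two block norms, and `⟪χ, α v β⟫ = (α ⊗ 1) ⟪χ, v⟫ (β ⊗ 1)`.
Hence every quotient defining `L_{D_L}` at `v ⊕ w` (resp. `α v β`) is bounded by the corresponding
quotient for `v` or `w` (resp. `‖α‖ ‖β‖` times the one for `v`), which gives
`L_{D_L}(v ⊕ w) ≤ max (L_{D_L} v) (L_{D_L} w)` and `L_{D_L}(α v β) ≤ ‖α‖ ‖β‖ L_{D_L}(v)`.
-/

open scoped ENNReal ComplexOrder
open Matrix

noncomputable section

abbrev Mat (n : ℕ) (V : Type*) := Matrix (Fin n) (Fin n) V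
abbrev CMat (m n : ℕ) := Matrix (Fin m) (Fin n) ℂ

/-- The operator norm (ℓ² → ℓ²) of a complex rectangular matrix. -/
def opNorm {I J : Type*} [Fintype I] [Fintype J] [DecidableEq I] [DecidableEq J]
    (M : Matrix I J ℂ) : ℝ :=
  ‖LinearMap.toContinuousLinearMap (Matrix.toEuclideanLin M)‖

variable {V : Type*} [AddCommGroup V] [Module ℂ V] [StarAddMonoid V] [StarModule ℂ V]

/-- `γᴴ a γ` for a scalar matrix `γ` and a matrix `a` over `V`. -/
def conjEntry {m n : ℕ} (γ : CMat m n) (a : Mat m V) : Mat n V :=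
  Matrix.of fun i j => ∑ k, ∑ l, (star (γ k i) * γ l j) • a k l

/-- `α a β` for scalar matrices `α, β` and a matrix `a` over `V`. -/
def cMul {m n : ℕ} (α : CMat n m) (a : Mat m V) (β : CMat m n) : Mat n V :=
  Matrix.of fun i j => ∑ k, ∑ l, (α i k * β l j) • a k l

/-- The direct sum `a ⊕ b` of two square matrices. -/
def dSum {W : Type*} [AddCommGroup W] {m n : ℕ} (a : Matrix (Fin m) (Fin m) W)
    (b : Matrix (Fin n) (Fin n) W) : Matrix (Fin (m + n)) (Fin (m + n)) W :=
  (Matrix.fromBlocks a 0 0 b).submatrix finSumFinEquiv.symm finSumFinEquiv.symm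

/-- The canonical identification of `V` with `M₁(V)`. -/
def toM1 (v : V) : Mat 1 V := Matrix.of fun _ _ => v

/-- The diagonal matrix with diagonal entries `e`. -/
def unitM (e : V) (n : ℕ) : Mat n V := Matrix.of fun i j => if i = j then e else 0

/-- The scalar matrix `[c i j • e]`. -/
def scalMat (e : V) {n : ℕ} (c : CMat n n) : Mat n V := Matrix.of fun i j => c i j • e

/-- `a` is a scalar matrix, i.e. `a ∈ Mₙ(ℂ·e)`. -/
def isScalarMat (e : V) {n : ℕ} (a : Mat n V) : Prop := ∃ c : CMat n n, a = scalMat e c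

/-- The 2×2 block matrix `[[t·1, v], [vᴴ, t·1]]`. -/
def blockSA (e : V) {n : ℕ} (t : ℝ) (v : Mat n V) : Mat (n + n) V :=
  (Matrix.fromBlocks ((t : ℂ) • unitM e n) v vᴴ ((t : ℂ) • unitM e n)).submatrix
    finSumFinEquiv.symm finSumFinEquiv.symm

/-- A matrix order unit space `(V, 1)`: a matrix ordered *-vector space together with a
distinguished order unit such that `V⁺` is a proper cone with order unit `1` and each of the
cones `Mₙ(V)⁺` is Archimedean. -/
structure MOUS (V : Type*) [AddCommGroup V] [Module ℂ V] [StarAddMonoid V]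
    [StarModule ℂ V] where
  unit : V
  star_unit : star unit = unit
  pos : ∀ n, Set (Mat n V)
  zero_mem : ∀ n, (0 : Mat n V) ∈ pos n
  add_mem : ∀ n, ∀ a ∈ pos n, ∀ b ∈ pos n, a + b ∈ pos n
  smul_mem : ∀ n (t : ℝ), 0 ≤ t → ∀ a ∈ pos n, ((t : ℂ) • a) ∈ pos n
  isSelfAdjoint_mem : ∀ n, ∀ a ∈ pos n, aᴴ = a
  conj_mem : ∀ m n (γ : CMat m n), ∀ a ∈ pos m, conjEntry γ a ∈ pos n
  proper : ∀ n, ∀ a ∈ pos n, -a ∈ pos n → a = 0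
  orderUnit : ∀ v : V, star v = v → ∃ t : ℝ, 0 < t ∧ toM1 ((t : ℂ) • unit - v) ∈ pos 1
  arch : ∀ n (a : Mat n V), aᴴ = a →
    (∀ t : ℝ, 0 < t → ((t : ℂ) • unitM unit n + a) ∈ pos n) → a ∈ pos n

/-- The norm on `Mₙ(V)` determined by the matrix order:
`‖v‖ₙ = inf {t : [[t1, v], [v*, t1]] ≥ 0}`. -/
def MOUS.matNorm (S : MOUS V) (n : ℕ) (v : Mat n V) : ℝ :=
  sInf {t : ℝ | blockSA S.unit t v ∈ S.pos (n + n)}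

/-- The matrix pairing `⟪φ, a⟫ = [φ(a_{ij})]`, as a complex matrix indexed by
`Fin r × Fin n`. -/
def pairing {n r : ℕ} (φ : V →ₗ[ℂ] CMat n n) (a : Mat r V) :
    Matrix (Fin r × Fin n) (Fin r × Fin n) ℂ :=
  Matrix.of fun p q => φ (a p.1 q.1) p.2 q.2

/-- The matrix state space: `CSₙ(V)` is the set of unital completely positive maps
`V → Mₙ`. -/
def MOUS.CS (S : MOUS V) (n : ℕ) : Set (V →ₗ[ℂ] CMat n n) :=
  {φ | φ S.unit = 1 ∧ ∀ r, ∀ a ∈ S.pos r, (pairing φ a).PosSemidef}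

/-- A matrix Lipschitz seminorm on a matrix order unit space. -/
structure MatLip (S : MOUS V) where
  L : ∀ n, Mat n V → ℝ
  nonneg : ∀ n a, 0 ≤ L n a
  add_le : ∀ n (a b : Mat n V), L n (a + b) ≤ L n a + L n b
  smul_eq : ∀ n (c : ℂ) (a : Mat n V), L n (c • a) = ‖c‖ * L n a
  null : ∀ n (a : Mat n V), L n a = 0 ↔ isScalarMat S.unit a
  dSum_eq : ∀ m n (v : Mat m V) (w : Mat n V), L (m + n) (dSum v w) = max (L m v) (L n w)
  cMul_le : ∀ m n (α : CMat n m) (v : Mat m V) (β : CMat m n),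
    L n (cMul α v β) ≤ opNorm α * L m v * opNorm β
  star_eq : ∀ n (v : Mat n V), L n vᴴ = L n v

/-- The metric `D_{Lₙ}` on the matrix state space `CSₙ(V)` (with values in `[0,∞]`). -/
def Dl (S : MOUS V) (Lp : MatLip S) {n : ℕ} (φ ψ : V →ₗ[ℂ] CMat n n) : ℝ≥0∞ :=
  ⨆ (r : ℕ) (a : Mat r V) (_ : Lp.L r a ≤ 1),
    ENNReal.ofReal (opNorm (pairing φ a - pairing ψ a))

/-- The gauge `L_{D_{Lₙ}}` recovered from the matrix metric `D_L`. -/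
def LDl (S : MOUS V) (Lp : MatLip S) (n : ℕ) (a : Mat n V) : ℝ≥0∞ :=
  ⨆ (r : ℕ) (φ : V →ₗ[ℂ] CMat r r) (_ : φ ∈ S.CS r) (ψ : V →ₗ[ℂ] CMat r r)
    (_ : ψ ∈ S.CS r) (_ : φ ≠ ψ),
    ENNReal.ofReal (opNorm (pairing φ a - pairing ψ a)) / Dl S Lp φ ψ

section EuclideanNorm

variable {𝕜 ι κ : Type*} [RCLike 𝕜] [Fintype ι] [Fintype κ]

lemma EuclideanSpace.norm_sq_sum_type (x : EuclideanSpace 𝕜 (ι ⊕ κ)) :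
    ‖x‖ ^ 2 = ‖(WithLp.toLp 2 fun i => x (Sum.inl i) : EuclideanSpace 𝕜 ι)‖ ^ 2
      + ‖(WithLp.toLp 2 fun k => x (Sum.inr k) : EuclideanSpace 𝕜 κ)‖ ^ 2 := by
  simp only [EuclideanSpace.norm_sq_eq, Fintype.sum_sum_type]

lemma EuclideanSpace.norm_sq_prod_type (x : EuclideanSpace 𝕜 (ι × κ)) :
    ‖x‖ ^ 2 = ∑ k, ‖(WithLp.toLp 2 fun i => x (i, k) : EuclideanSpace 𝕜 ι)‖ ^ 2 := by
  simp only [EuclideanSpace.norm_sq_eq, Fintype.sum_prod_type]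
  exact Finset.sum_comm

end EuclideanNorm

section OpNorm

variable {ι κ ι' κ' o : Type*} [Fintype ι] [Fintype κ] [Fintype ι'] [Fintype κ'] [Fintype o]
  [DecidableEq ι] [DecidableEq κ] [DecidableEq ι'] [DecidableEq κ'] [DecidableEq o]

lemma opNorm_nonneg (M : Matrix ι κ ℂ) : 0 ≤ opNorm M := norm_nonneg _

lemma norm_toEuclideanLin_le (M : Matrix ι κ ℂ) (x : EuclideanSpace ℂ κ) :
    ‖Matrix.toEuclideanLin M x‖ ≤ opNorm M * ‖x‖ :=
  (LinearMap.toContinuousLinearMap (Matrix.toEuclideanLin M)).le_opNorm x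

lemma opNorm_le_of_sq_le {M : Matrix ι κ ℂ} {C : ℝ} (hC : 0 ≤ C)
    (h : ∀ x, ‖Matrix.toEuclideanLin M x‖ ^ 2 ≤ C ^ 2 * ‖x‖ ^ 2) : opNorm M ≤ C := by
  refine ContinuousLinearMap.opNorm_le_bound _ hC fun x => ?_
  rw [← sq_le_sq₀ (norm_nonneg _) (by positivity), mul_pow]
  exact h x

lemma opNorm_mul_le (A : Matrix ι κ ℂ) (B : Matrix κ o ℂ) :
    opNorm (A * B) ≤ opNorm A * opNorm B := by
  open scoped Matrix.Norms.L2Operator in exact Matrix.l2_opNorm_mul A B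

lemma opNorm_submatrix_equiv (M : Matrix ι' κ' ℂ) (e : ι ≃ ι') (f : κ ≃ κ') :
    opNorm (M.submatrix e f) = opNorm M := by
  have hcomp : LinearMap.toContinuousLinearMap (Matrix.toEuclideanLin (M.submatrix e f))
      = ((LinearIsometryEquiv.piLpCongrLeft 2 ℂ ℂ e.symm : _ →L[ℂ] _).comp
          (LinearMap.toContinuousLinearMap (Matrix.toEuclideanLin M))).comp
        (LinearIsometryEquiv.piLpCongrLeft 2 ℂ ℂ f : _ →L[ℂ] _) := by
    ext x i
    simp [Matrix.toEuclideanLin, Matrix.mulVec, dotProduct]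
  rw [opNorm, hcomp, ContinuousLinearMap.opNorm_comp_linearIsometryEquiv,
    ContinuousLinearMap.opNorm_linearIsometryEquiv_comp]
  rfl

lemma opNorm_fromBlocks_zero_le (A : Matrix ι κ ℂ) (B : Matrix ι' κ' ℂ) :
    opNorm (Matrix.fromBlocks A 0 0 B) ≤ max (opNorm A) (opNorm B) := by
  refine opNorm_le_of_sq_le (le_max_of_le_left (opNorm_nonneg A)) fun x => ?_
  set x₁ : EuclideanSpace ℂ κ := WithLp.toLp 2 fun k => x (Sum.inl k)
  set x₂ : EuclideanSpace ℂ κ' := WithLp.toLp 2 fun k => x (Sum.inr k)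
  have hA : ‖Matrix.toEuclideanLin A x₁‖ ≤ max (opNorm A) (opNorm B) * ‖x₁‖ :=
    (norm_toEuclideanLin_le A x₁).trans (by gcongr; exact le_max_left _ _)
  have hB : ‖Matrix.toEuclideanLin B x₂‖ ≤ max (opNorm A) (opNorm B) * ‖x₂‖ :=
    (norm_toEuclideanLin_le B x₂).trans (by gcongr; exact le_max_right _ _)
  have h₁ : (WithLp.toLp 2 fun i => Matrix.toEuclideanLin (Matrix.fromBlocks A 0 0 B) x
      (Sum.inl i) : EuclideanSpace ℂ ι) = Matrix.toEuclideanLin A x₁ := by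
    ext i
    simp [x₁, Matrix.toEuclideanLin, Matrix.mulVec, dotProduct, Fintype.sum_sum_type]
  have h₂ : (WithLp.toLp 2 fun i => Matrix.toEuclideanLin (Matrix.fromBlocks A 0 0 B) x
      (Sum.inr i) : EuclideanSpace ℂ ι') = Matrix.toEuclideanLin B x₂ := by
    ext i
    simp [x₂, Matrix.toEuclideanLin, Matrix.mulVec, dotProduct, Fintype.sum_sum_type]
  rw [EuclideanSpace.norm_sq_sum_type, EuclideanSpace.norm_sq_sum_type x, h₁, h₂, mul_add]
  gcongr <;> rw [← mul_pow] <;> gcongr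

lemma opNorm_blockDiagonal_le (M : o → Matrix ι κ ℂ) {C : ℝ} (hC : 0 ≤ C)
    (hM : ∀ k, opNorm (M k) ≤ C) : opNorm (Matrix.blockDiagonal M) ≤ C := by
  refine opNorm_le_of_sq_le hC fun x => ?_
  rw [EuclideanSpace.norm_sq_prod_type, EuclideanSpace.norm_sq_prod_type x, Finset.mul_sum]
  refine Finset.sum_le_sum fun k _ => ?_
  set xₖ : EuclideanSpace ℂ κ := WithLp.toLp 2 fun j => x (j, k)
  have hk : (WithLp.toLp 2 fun i => Matrix.toEuclideanLin (Matrix.blockDiagonal M) x (i, k)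
      : EuclideanSpace ℂ ι) = Matrix.toEuclideanLin (M k) xₖ := by
    ext i
    simp [xₖ, Matrix.toEuclideanLin, Matrix.mulVec, dotProduct, Fintype.sum_prod_type,
      Matrix.blockDiagonal_apply]
  rw [hk, ← mul_pow]
  gcongr
  exact (norm_toEuclideanLin_le _ _).trans (by gcongr; exact hM k)

end OpNorm

section Pairing

variable {W : Type*} [AddCommGroup W] [Module ℂ W]

lemma pairing_sub_pairing {n r : ℕ} (φ ψ : W →ₗ[ℂ] CMat n n) (a : Mat r W) :
    pairing φ a - pairing ψ a = pairing (φ - ψ) a := by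
  ext
  simp [pairing]

def finSumProdEquiv (m n r : ℕ) : Fin (m + n) × Fin r ≃ (Fin m × Fin r) ⊕ (Fin n × Fin r) :=
  (finSumFinEquiv.symm.prodCongr (Equiv.refl (Fin r))).trans (Equiv.sumProdDistrib _ _ _)

lemma pairing_dSum {m n r : ℕ} (χ : W →ₗ[ℂ] CMat r r) (v : Mat m W) (w : Mat n W) :
    pairing χ (dSum v w) = (Matrix.fromBlocks (pairing χ v) 0 0 (pairing χ w)).submatrix
      (finSumProdEquiv m n r) (finSumProdEquiv m n r) := by
  ext ⟨i, s⟩ ⟨j, t⟩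
  simp only [pairing, Matrix.of_apply, dSum, Matrix.submatrix_apply, finSumProdEquiv,
    Equiv.trans_apply, Equiv.prodCongr_apply, Equiv.coe_refl, Prod.map]
  rcases finSumFinEquiv.symm i with a | a <;> rcases finSumFinEquiv.symm j with b | b <;>
    simp [Equiv.sumProdDistrib]

lemma pairing_cMul {m n r : ℕ} (χ : W →ₗ[ℂ] CMat r r) (α : CMat n m) (v : Mat m W)
    (β : CMat m n) :
    pairing χ (cMul α v β) = Matrix.blockDiagonal (fun _ : Fin r => α) * pairing χ v *
      Matrix.blockDiagonal (fun _ : Fin r => β) := by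
  ext ⟨i, s⟩ ⟨j, u⟩
  simp only [pairing, cMul, Matrix.of_apply, map_sum, map_smul, Matrix.sum_apply,
    Matrix.smul_apply, smul_eq_mul, Matrix.mul_apply, Matrix.blockDiagonal_apply,
    Fintype.sum_prod_type, Finset.sum_mul, ite_mul, mul_ite, zero_mul, mul_zero,
    Finset.sum_ite_eq, Finset.sum_ite_eq', Finset.mem_univ, if_true]
  rw [Finset.sum_comm]
  exact Finset.sum_congr rfl fun l _ => Finset.sum_congr rfl fun k _ => by ring

lemma opNorm_pairing_dSum_le {m n r : ℕ} (χ : W →ₗ[ℂ] CMat r r) (v : Mat m W) (w : Mat n W) :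
    opNorm (pairing χ (dSum v w)) ≤ max (opNorm (pairing χ v)) (opNorm (pairing χ w)) := by
  rw [pairing_dSum, opNorm_submatrix_equiv]
  exact opNorm_fromBlocks_zero_le _ _

lemma opNorm_pairing_cMul_le {m n r : ℕ} (χ : W →ₗ[ℂ] CMat r r) (α : CMat n m) (v : Mat m W)
    (β : CMat m n) :
    opNorm (pairing χ (cMul α v β)) ≤ opNorm α * opNorm (pairing χ v) * opNorm β := by
  rw [pairing_cMul]
  set A := Matrix.blockDiagonal fun _ : Fin r => α
  set B := Matrix.blockDiagonal fun _ : Fin r => β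
  have hA : opNorm A ≤ opNorm α := opNorm_blockDiagonal_le _ (opNorm_nonneg α) fun _ => le_rfl
  have hB : opNorm B ≤ opNorm β := opNorm_blockDiagonal_le _ (opNorm_nonneg β) fun _ => le_rfl
  calc opNorm (A * pairing χ v * B) ≤ opNorm A * opNorm (pairing χ v) * opNorm B :=
        (opNorm_mul_le _ _).trans
          (mul_le_mul_of_nonneg_right (opNorm_mul_le _ _) (opNorm_nonneg B))
    _ ≤ opNorm α * opNorm (pairing χ v) * opNorm β :=
        mul_le_mul (mul_le_mul_of_nonneg_right hA (opNorm_nonneg _)) hB (opNorm_nonneg B)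
          (mul_nonneg (opNorm_nonneg α) (opNorm_nonneg _))

end Pairing

section LDl

variable (S : MOUS V) (Lp : MatLip S)

lemma LDl_le_iff {n : ℕ} (a : Mat n V) (c : ℝ≥0∞) :
    LDl S Lp n a ≤ c ↔ ∀ r, ∀ φ ∈ S.CS r, ∀ ψ ∈ S.CS r, φ ≠ ψ →
      ENNReal.ofReal (opNorm (pairing (φ - ψ) a)) / Dl S Lp φ ψ ≤ c := by
  simp only [LDl, iSup_le_iff, pairing_sub_pairing]

lemma LDl_dSum_le {m n : ℕ} (v : Mat m V) (w : Mat n V) :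
    LDl S Lp (m + n) (dSum v w) ≤ max (LDl S Lp m v) (LDl S Lp n w) := by
  rw [LDl_le_iff]
  intro r φ hφ ψ hψ hne
  have hmono : Monotone fun t : ℝ => ENNReal.ofReal t / Dl S Lp φ ψ :=
    fun _ _ h => ENNReal.div_le_div_right (ENNReal.ofReal_le_ofReal h) _
  refine (hmono (opNorm_pairing_dSum_le _ v w)).trans (hmono.map_max.trans_le ?_)
  exact max_le_max ((LDl_le_iff S Lp v _).1 le_rfl r φ hφ ψ hψ hne)
    ((LDl_le_iff S Lp w _).1 le_rfl r φ hφ ψ hψ hne)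

lemma LDl_cMul_le {m n : ℕ} (α : CMat n m) (v : Mat m V) (β : CMat m n) :
    LDl S Lp n (cMul α v β) ≤ ENNReal.ofReal (opNorm α * opNorm β) * LDl S Lp m v := by
  rw [LDl_le_iff]
  intro r φ hφ ψ hψ hne
  calc ENNReal.ofReal (opNorm (pairing (φ - ψ) (cMul α v β))) / Dl S Lp φ ψ
      ≤ ENNReal.ofReal (opNorm α * opNorm β * opNorm (pairing (φ - ψ) v)) / Dl S Lp φ ψ := by
        gcongr
        exact (opNorm_pairing_cMul_le _ α v β).trans_eq (by ring)
    _ = ENNReal.ofReal (opNorm α * opNorm β) *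
          (ENNReal.ofReal (opNorm (pairing (φ - ψ) v)) / Dl S Lp φ ψ) := by
        rw [ENNReal.ofReal_mul (mul_nonneg (opNorm_nonneg α) (opNorm_nonneg β)), mul_div_assoc]
    _ ≤ ENNReal.ofReal (opNorm α * opNorm β) * LDl S Lp m v := by
        gcongr
        exact (LDl_le_iff S Lp v _).1 le_rfl r φ hφ ψ hψ hne

end LDl

/-- the graded set of unit balls `(L_{D_{Lₙ}}¹)` is absolutely matrix convex. -/
theorem LDl_unitBall_absolutelyMatrixConvex (S : MOUS V) (Lp : MatLip S) :
    (∀ m n (v : Mat m V) (w : Mat n V),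
      LDl S Lp m v ≤ 1 → LDl S Lp n w ≤ 1 → LDl S Lp (m + n) (dSum v w) ≤ 1) ∧
    (∀ m n (α : CMat n m) (v : Mat m V) (β : CMat m n), opNorm α ≤ 1 → opNorm β ≤ 1 →
      LDl S Lp m v ≤ 1 → LDl S Lp n (cMul α v β) ≤ 1) := by
  refine ⟨fun m n v w hv hw => (LDl_dSum_le S Lp v w).trans (max_le hv hw),
    fun m n α v β hα hβ hv => (LDl_cMul_le S Lp α v β).trans ?_⟩
  exact mul_le_one' (ENNReal.ofReal_le_one.2 (mul_le_one₀ hα (opNorm_nonneg β) hβ)) hv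
end
end

section
/- Let L = (Lₙ) be any matrix Lipschitz seminorm on a matrix order unit space (V,1). Then each L_{D_{Lₙ}} is lower semicontinuous: if a net (a_i) in Mₙ(V) converges weakly to a ∈ Mₙ(V) (i.e., with respect to the matrix pairing with M_r(V*)), then L_{D_{Lₙ}}(a) ≤ liminf_i L_{D_{Lₙ}}(a_i). -/
open scoped ENNReal ComplexOrder
open Matrix

noncomputable section

variable {V : Type*} [AddCommGroup V] [Module ℂ V] [StarAddMonoid V] [StarModule ℂ V]

/-- A bounded linear functional on `V`, i.e. an element of `V*`. -/
def Bounded1 (S : MOUS V) (f : V →ₗ[ℂ] ℂ) : Prop :=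
  ∃ C : ℝ, ∀ v : V, ‖f v‖ ≤ C * S.matNorm 1 (toM1 v)

/-!
Each quotient `‖⟪φ, a⟫ - ⟪ψ, a⟫‖ / D_L(φ, ψ)` in the supremum defining `L_{D_L}` is weakly
continuous in `a`, and a supremum of continuous functions is lower semicontinuous. Continuity holds
because the entries of `⟪φ, a⟫` are values of the functionals `v ↦ φ(v)_{pq}`, which are bounded:
if `[[t·1, v], [v*, t·1]] ≥ 0` then its image under `φ` is a positive matrix with diagonal `t`, so
`|φ(v)_{pq}| ≤ t`. Such a `t` exists for every `v`, by writing `v = h + i k` with `h, k`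
self-adjoint and dominating `±h, ±k` by multiples of the order unit.
-/

open Filter Topology ComplexStarModule

lemma Matrix.PosSemidef.norm_apply_le {ι : Type*} [Fintype ι] {M : Matrix ι ι ℂ}
    (hM : M.PosSemidef) {x y : ι} {t : ℝ} (hx : M x x = t) (hy : M y y = t) :
    ‖M x y‖ ≤ t := by
  have ht : 0 ≤ t := by simpa [hx] using hM.diag_nonneg (i := x)
  have hdet := (hM.submatrix ![x, y]).det_nonneg
  simp only [det_fin_two, submatrix_apply, Matrix.cons_val_zero, Matrix.cons_val_one, hx, hy,
    ← hM.isHermitian.apply y x, Complex.star_def, Complex.mul_conj,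
    Complex.normSq_eq_norm_sq] at hdet
  have hsq : ‖M x y‖ ^ 2 ≤ t ^ 2 := by
    rw [sq t]
    exact_mod_cast sub_nonneg.mp hdet
  exact (pow_le_pow_iff_left₀ (norm_nonneg _) ht two_ne_zero).mp hsq

lemma continuous_opNorm {I J : Type*} [Fintype I] [Fintype J] [DecidableEq I] [DecidableEq J] :
    Continuous (opNorm : Matrix I J ℂ → ℝ) :=
  continuous_norm.comp (LinearMap.continuous_of_finiteDimensional
    (LinearMap.toContinuousLinearMap.toLinearMap ∘ₗ Matrix.toEuclideanLin.toLinearMap :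
      Matrix I J ℂ →ₗ[ℂ] (EuclideanSpace ℂ J →L[ℂ] EuclideanSpace ℂ I)))

lemma toM1_add {V : Type*} [Add V] (v w : V) : toM1 (v + w) = toM1 v + toM1 w := rfl

section BlockSA

variable {W : Type*} [AddCommGroup W] [Module ℂ W] [StarAddMonoid W]

lemma blockSA_add (e : W) {n : ℕ} (s t : ℝ) (v w : Mat n W) :
    blockSA e (s + t) (v + w) = blockSA e s v + blockSA e t w := by
  simp only [blockSA, Complex.ofReal_add, add_smul, conjTranspose_add, ← fromBlocks_add]
  rfl

lemma blockSA_toM1 (e : W) (t : ℝ) (v : W) :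
    blockSA e t (toM1 v) = !![(t : ℂ) • e, v; star v, (t : ℂ) • e] := by
  ext i j
  fin_cases i <;> fin_cases j <;> rfl

end BlockSA

namespace MOUS

variable (S : MOUS V)

lemma toM1_unit_mem : toM1 S.unit ∈ S.pos 1 := by
  obtain ⟨t, ht, hmem⟩ := S.orderUnit (-S.unit) (by rw [star_neg, S.star_unit])
  have key := S.smul_mem 1 (t + 1)⁻¹ (by positivity) _ hmem
  convert key using 1
  ext
  have hunit : (((t + 1)⁻¹ * (t + 1) : ℝ) : ℂ) • S.unit = S.unit := by
    rw [inv_mul_cancel₀ (by positivity), Complex.ofReal_one, one_smul]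
  simp only [toM1, Matrix.smul_apply, of_apply]
  conv_lhs => rw [← hunit]
  push_cast
  module

lemma toM1_smul_unit_add_mem {s : ℝ} (hs : 0 ≤ s) {v : V} (hv : toM1 v ∈ S.pos 1) :
    toM1 ((s : ℂ) • S.unit + v) ∈ S.pos 1 :=
  S.add_mem 1 _ (S.smul_mem 1 s hs _ S.toM1_unit_mem) _ hv

lemma exists_toM1_smul_unit_sub_mem_and_add_mem {h : V} (hh : star h = h) :
    ∃ c : ℝ, toM1 ((c : ℂ) • S.unit - h) ∈ S.pos 1 ∧ toM1 ((c : ℂ) • S.unit + h) ∈ S.pos 1 := by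
  obtain ⟨t₁, ht₁, hsub⟩ := S.orderUnit h hh
  obtain ⟨t₂, ht₂, hadd⟩ := S.orderUnit (-h) (by rw [star_neg, hh])
  refine ⟨t₁ + t₂, ?_, ?_⟩
  · convert S.toM1_smul_unit_add_mem ht₂.le hsub using 2
    push_cast; module
  · convert S.toM1_smul_unit_add_mem ht₁.le hadd using 2
    push_cast; module

lemma exists_blockSA_smul_mem {z : ℂ} (hz : starRingEnd ℂ z * z = 1) {h : V} (hh : star h = h) :
    ∃ c : ℝ, blockSA S.unit c (toM1 (z • h)) ∈ S.pos (1 + 1) := by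
  obtain ⟨c, hsub, hadd⟩ := S.exists_toM1_smul_unit_sub_mem_and_add_mem hh
  refine ⟨c, ?_⟩
  -- `½ ([1, z]ᴴ (c·1 + h) [1, z] + [1, -z]ᴴ (c·1 - h) [1, -z]) = [[c·1, z h], [z̄ h, c·1]]`
  have key := S.smul_mem _ (1 / 2) (by norm_num) _ (S.add_mem _ _
    (S.conj_mem 1 (1 + 1) !![1, z] _ hadd) _ (S.conj_mem 1 (1 + 1) !![1, -z] _ hsub))
  convert key using 1
  rw [blockSA_toM1]
  ext i j
  fin_cases i <;> fin_cases j <;>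
    simp only [conjEntry, toM1, of_apply, Matrix.smul_apply, Matrix.add_apply,
      Fin.sum_univ_one, cons_val', cons_val_zero, cons_val_one, cons_val_fin_one, star_smul, hh,
      Complex.star_def, map_one, map_neg, one_mul, mul_one, neg_mul, mul_neg, hz,
      Fin.zero_eta, Fin.mk_one, Fin.isValue] <;>
    module

lemma exists_blockSA_mem (v : V) : ∃ t : ℝ, blockSA S.unit t (toM1 v) ∈ S.pos (1 + 1) := by
  obtain ⟨c, hc⟩ := S.exists_blockSA_smul_mem (z := 1) (by simp) (ℜ v).prop.star_eq
  obtain ⟨d, hd⟩ := S.exists_blockSA_smul_mem (z := Complex.I) (by simp) (ℑ v).prop.star_eq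
  refine ⟨c + d, ?_⟩
  rw [one_smul] at hc
  rw [← realPart_add_I_smul_imaginaryPart v]
  simpa only [toM1_add, blockSA_add] using S.add_mem _ _ hc _ hd

lemma norm_apply_le_of_blockSA_mem {r : ℕ} {φ : V →ₗ[ℂ] CMat r r} (hφ : φ ∈ S.CS r) {v : V}
    {t : ℝ} (ht : blockSA S.unit t (toM1 v) ∈ S.pos (1 + 1)) (p q : Fin r) :
    ‖φ v p q‖ ≤ t := by
  have hpsd : (pairing φ (blockSA S.unit t (toM1 v))).PosSemidef := hφ.2 _ _ ht
  rw [blockSA_toM1] at hpsd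
  simpa [pairing] using hpsd.norm_apply_le (x := (0, p)) (y := (1, q))
    (by simp [pairing, hφ.1]) (by simp [pairing, hφ.1])

lemma norm_apply_le_matNorm {r : ℕ} {φ : V →ₗ[ℂ] CMat r r} (hφ : φ ∈ S.CS r) (v : V)
    (p q : Fin r) : ‖φ v p q‖ ≤ S.matNorm 1 (toM1 v) :=
  le_csInf (S.exists_blockSA_mem v) fun _ ht => S.norm_apply_le_of_blockSA_mem hφ ht p q

lemma bounded1_entryLinearMap_comp {r : ℕ} {φ : V →ₗ[ℂ] CMat r r} (hφ : φ ∈ S.CS r)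
    (p q : Fin r) : Bounded1 S (entryLinearMap ℂ ℂ p q ∘ₗ φ) :=
  ⟨1, fun v => (one_mul (S.matNorm 1 (toM1 v))).symm ▸ S.norm_apply_le_matNorm hφ v p q⟩

lemma tendsto_pairing {r n : ℕ} {φ : V →ₗ[ℂ] CMat r r} (hφ : φ ∈ S.CS r) {ι : Type*}
    {F : Filter ι} {a_ : ι → Mat n V} {a : Mat n V}
    (hconv : ∀ f : V →ₗ[ℂ] ℂ, Bounded1 S f → ∀ i j,
      Tendsto (fun k => f (a_ k i j)) F (𝓝 (f (a i j)))) :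
    Tendsto (fun k => pairing φ (a_ k)) F (𝓝 (pairing φ a)) :=
  tendsto_pi_nhds.2 fun x => tendsto_pi_nhds.2 fun y =>
    hconv _ (S.bounded1_entryLinearMap_comp hφ x.2 y.2) x.1 y.1

end MOUS

lemma div_Dl_le_LDl (S : MOUS V) (Lp : MatLip S) {n r : ℕ} {φ ψ : V →ₗ[ℂ] CMat r r}
    (hφ : φ ∈ S.CS r) (hψ : ψ ∈ S.CS r) (hne : φ ≠ ψ) (a : Mat n V) :
    ENNReal.ofReal (opNorm (pairing φ a - pairing ψ a)) / Dl S Lp φ ψ ≤ LDl S Lp n a :=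
  le_iSup_of_le r <| le_iSup_of_le φ <| le_iSup_of_le hφ <| le_iSup_of_le ψ <|
    le_iSup_of_le hψ <| le_iSup_of_le hne le_rfl

/-- each `L_{D_{Lₙ}}` is lower semicontinuous for the weak topology: if a net
`(a_i)` in `Mₙ(V)` converges weakly (w.r.t. the pairing with `V*`) to `a`, then
`L_{D_{Lₙ}}(a) ≤ liminf_i L_{D_{Lₙ}}(a_i)`. -/
theorem LDl_weakly_lowerSemicontinuous (S : MOUS V) (Lp : MatLip S) (n : ℕ)
    {ι : Type*} (F : Filter ι) [F.NeBot] (a_ : ι → Mat n V) (a : Mat n V)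
    (hconv : ∀ f : V →ₗ[ℂ] ℂ, Bounded1 S f → ∀ i j,
      Filter.Tendsto (fun k => f (a_ k i j)) F (nhds (f (a i j)))) :
    LDl S Lp n a ≤ Filter.liminf (fun k => LDl S Lp n (a_ k)) F := by
  refine iSup_le fun r => iSup_le fun φ => iSup_le fun hφ => iSup_le fun ψ =>
    iSup_le fun hψ => iSup_le fun hne => ?_
  have hnum : Tendsto (fun k => ENNReal.ofReal (opNorm (pairing φ (a_ k) - pairing ψ (a_ k)))) F
      (𝓝 (ENNReal.ofReal (opNorm (pairing φ a - pairing ψ a)))) :=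
    ENNReal.tendsto_ofReal <| (continuous_opNorm.tendsto _).comp <|
      (S.tendsto_pairing hφ hconv).sub (S.tendsto_pairing hψ hconv)
  obtain h0 | h0 := eq_or_ne (ENNReal.ofReal (opNorm (pairing φ a - pairing ψ a))) 0
  · simp [h0]
  rw [← (ENNReal.Tendsto.div_const hnum (.inl h0)).liminf_eq]
  exact liminf_le_liminf (.of_forall fun k => div_Dl_le_LDl S Lp hφ hψ hne (a_ k))
end
end

section
/- Let (V,1) be a matrix order unit space and let D = (Dₙ) be a matrix metric on CS(V) that is convex, midpoint balanced and midpoint concave. Then for each n there is a norm Q''ₙ on the real vector space ℝ·SBₙ²(Ṽ) such that Q''ₙ(α*fα) ≤ ‖α‖²·Q''ₘ(f) for f ∈ ℝ·SBₘ²(Ṽ) and α ∈ M_{m,n}, Q''_{m+n}(f ⊕ g) = max{Q''ₘ(f), Q''ₙ(g)}, and Q''ₙ(φ − ψ) = Dₙ(φ,ψ) for all φ, ψ ∈ CSₙ(V). -/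
/-!
Midpoint balance makes `Dₙ(φ, ψ)` depend only on `φ - ψ`, and convexity together with the
triangle inequality makes it linear along segments: `Dₙ(rφ + (1 - r)ψ, ψ) = r Dₙ(φ, ψ)`. Hence
`Q''ₙ(t(φ - ψ)) := t Dₙ(φ, ψ)` (`t ≥ 0`) is well defined. Two elements of `ℝ·SB²(Ṽ)` can be
written with a common scale `t`; then subadditivity is the triangle inequality through a midpoint
state and the direct-sum rule is that of `D`. For the compression write `α = ‖α‖ α'` and complete
`α'` to an isometry `β = [α'; γ]` with `γ*γ = 1 - α'*α'`: for any state `χ`,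
`α'*(φ - ψ)α' = β*(φ ⊕ χ)β - β*(ψ ⊕ χ)β`, and `D` does not increase under `β*(·)β`.
-/

open scoped ENNReal ComplexOrder
open Matrix

noncomputable section

variable {V : Type*} [AddCommGroup V] [Module ℂ V] [StarAddMonoid V] [StarModule ℂ V]

/-- The direct sum `f ⊕ g` of elements of `Mₘ(V*)` and `Mₙ(V*)` (viewed as maps into matrix
algebras): `v ↦ f(v) ⊕ g(v)`. -/
def mapDSum {m n : ℕ} (f : V →ₗ[ℂ] CMat m m) (g : V →ₗ[ℂ] CMat n n) :
    V →ₗ[ℂ] CMat (m + n) (m + n) where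
  toFun v := dSum (f v) (g v)
  map_add' u v := by
    ext i j
    rcases h1 : finSumFinEquiv.symm i with i' | i' <;> rcases h2 : finSumFinEquiv.symm j with j' | j' <;>
      simp [dSum, Matrix.submatrix_apply, h1, h2, map_add, Matrix.add_apply]
  map_smul' c v := by
    ext i j
    rcases h1 : finSumFinEquiv.symm i with i' | i' <;> rcases h2 : finSumFinEquiv.symm j with j' | j' <;>
      simp [dSum, Matrix.submatrix_apply, h1, h2, _root_.map_smul, Matrix.smul_apply]

/-- The product `α f β` of an element `f` of `Mₘ(V*)` with scalar matrices:
`v ↦ α f(v) β`. -/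
def mapCMul {m n : ℕ} (α : CMat n m) (f : V →ₗ[ℂ] CMat m m) (β : CMat m n) :
    V →ₗ[ℂ] CMat n n where
  toFun v := α * f v * β
  map_add' u v := by simp [map_add, Matrix.mul_add, Matrix.add_mul]
  map_smul' c v := by simp [_root_.map_smul, Matrix.mul_smul, Matrix.smul_mul]

/-- A matrix metric on the matrix state space `CS(V)`. -/
structure MatMetric (S : MOUS V) where
  D : ∀ n, (V →ₗ[ℂ] CMat n n) → (V →ₗ[ℂ] CMat n n) → ℝ
  nonneg : ∀ n (φ ψ : V →ₗ[ℂ] CMat n n), φ ∈ S.CS n → ψ ∈ S.CS n → 0 ≤ D n φ ψ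
  eq_zero_iff : ∀ n (φ ψ : V →ₗ[ℂ] CMat n n), φ ∈ S.CS n → ψ ∈ S.CS n →
    (D n φ ψ = 0 ↔ φ = ψ)
  symm : ∀ n (φ ψ : V →ₗ[ℂ] CMat n n), φ ∈ S.CS n → ψ ∈ S.CS n → D n φ ψ = D n ψ φ
  triangle : ∀ n (φ ψ χ : V →ₗ[ℂ] CMat n n), φ ∈ S.CS n → ψ ∈ S.CS n → χ ∈ S.CS n →
    D n φ χ ≤ D n φ ψ + D n ψ χ
  dsum_eq : ∀ m n (φ φ' : V →ₗ[ℂ] CMat m m) (ψ ψ' : V →ₗ[ℂ] CMat n n),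
    φ ∈ S.CS m → φ' ∈ S.CS m → ψ ∈ S.CS n → ψ' ∈ S.CS n →
    D (m + n) (mapDSum φ ψ) (mapDSum φ' ψ') = max (D m φ φ') (D n ψ ψ')
  conj_le : ∀ m n (α : CMat m n), αᴴ * α = 1 → ∀ (φ ψ : V →ₗ[ℂ] CMat m m),
    φ ∈ S.CS m → ψ ∈ S.CS m → D n (mapCMul αᴴ φ α) (mapCMul αᴴ ψ α) ≤ D m φ ψ

/-- A matrix metric on `CS(V)` is convex. -/
def MMConvex (S : MOUS V) (Dm : MatMetric S) : Prop :=
  ∀ n (φ ψ χ : V →ₗ[ℂ] CMat n n), φ ∈ S.CS n → ψ ∈ S.CS n → χ ∈ S.CS n →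
    ∀ t : ℝ, 0 ≤ t → t ≤ 1 →
      Dm.D n φ ((t : ℂ) • ψ + ((1 - t : ℝ) : ℂ) • χ) ≤ t * Dm.D n φ ψ + (1 - t) * Dm.D n φ χ

/-- A matrix metric on `CS(V)` is midpoint balanced. -/
def MMBalanced (S : MOUS V) (Dm : MatMetric S) : Prop :=
  ∀ n (x y u v : V →ₗ[ℂ] CMat n n), x ∈ S.CS n → y ∈ S.CS n → u ∈ S.CS n → v ∈ S.CS n →
    ((2 : ℂ)⁻¹ • (x + v) = (2 : ℂ)⁻¹ • (y + u)) → Dm.D n x u = Dm.D n y v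

/-- A matrix metric on `CS(V)` is midpoint concave. -/
def MMConcave (S : MOUS V) (Dm : MatMetric S) : Prop :=
  ∀ n (x y u v : V →ₗ[ℂ] CMat n n), x ∈ S.CS n → y ∈ S.CS n → u ∈ S.CS n → v ∈ S.CS n →
    Dm.D n ((2 : ℂ)⁻¹ • (x + u)) ((2 : ℂ)⁻¹ • (y + v)) ≤ (Dm.D n x y + Dm.D n u v) / 2

/-- The real vector space `ℝ·SBₙ²(Ṽ)` of real multiples of differences of matrix states. -/
def RSB (S : MOUS V) (n : ℕ) : Set (V →ₗ[ℂ] CMat n n) :=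
  {g | ∃ t : ℝ, ∃ φ ∈ S.CS n, ∃ ψ ∈ S.CS n, g = (t : ℂ) • (φ - ψ)}

lemma posSemidef_fromBlocks_zero {A B R : Type*} [Fintype A] [Fintype B] [DecidableEq A]
    [DecidableEq B] [CommRing R] [PartialOrder R] [StarRing R] [StarOrderedRing R]
    {P : Matrix A A R} {Q : Matrix B B R} (hP : P.PosSemidef) (hQ : Q.PosSemidef) :
    (fromBlocks P 0 0 Q).PosSemidef := by
  let E : Matrix A (A ⊕ B) R := fromCols 1 0
  let F : Matrix B (A ⊕ B) R := fromCols 0 1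
  have h : fromBlocks P 0 0 Q = Eᴴ * P * E + Fᴴ * Q * F := by
    simp only [E, F, conjTranspose_fromCols_eq_fromRows_conjTranspose, fromRows_mul]
    ext (i | i) (j | j) <;> simp
  rw [h]
  exact (hP.conjTranspose_mul_mul_same _).add (hQ.conjTranspose_mul_mul_same _)

section Matrices

open scoped Matrix.Norms.L2Operator MatrixOrder

variable {m n k : ℕ}

lemma exists_eq_opNorm_smul (α : CMat m n) :
    ∃ α' : CMat m n, opNorm α' ≤ 1 ∧ α = (opNorm α : ℂ) • α' := by
  rcases eq_or_ne α 0 with rfl | hα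
  · exact ⟨0, by simp [opNorm], by simp⟩
  · refine ⟨((opNorm α)⁻¹ : ℂ) • α, (norm_smul_inv_norm hα).le, ?_⟩
    rw [smul_smul, mul_inv_cancel₀ (by simpa [opNorm] using hα), one_smul]

lemma exists_conjTranspose_mul_add_eq_one (A : CMat m n) (h : opNorm A ≤ 1) :
    ∃ B : CMat n n, Aᴴ * A + Bᴴ * B = 1 := by
  have hle : Aᴴ * A ≤ 1 := by
    refine (IsSelfAdjoint.le_algebraMap_norm_self (isHermitian_conjTranspose_mul_self A)).trans ?_
    rw [l2_opNorm_conjTranspose_mul_self, ← map_one (algebraMap ℝ (CMat n n))]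
    apply algebraMap_mono
    exact mul_le_one₀ h (norm_nonneg A) h
  obtain ⟨B, hB⟩ := CStarAlgebra.nonneg_iff_eq_star_mul_self.mp (sub_nonneg.mpr hle)
  exact ⟨B, by rw [← star_eq_conjTranspose, ← hB]; abel⟩

def stackRows (A : CMat m n) (B : CMat k n) : Matrix (Fin (m + k)) (Fin n) ℂ :=
  (fromRows A B).submatrix finSumFinEquiv.symm id

lemma stackRows_conjTranspose_mul_dSum_mul (A : CMat m n) (B : CMat k n) (X : CMat m m)
    (Y : CMat k k) :
    (stackRows A B)ᴴ * dSum X Y * stackRows A B = Aᴴ * X * A + Bᴴ * Y * B := by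
  rw [stackRows, dSum, conjTranspose_submatrix, submatrix_mul_equiv, submatrix_mul_equiv,
    submatrix_id_id, conjTranspose_fromRows_eq_fromCols_conjTranspose,
    fromCols_mul_fromBlocks, fromCols_mul_fromRows]
  simp [Matrix.mul_assoc]

lemma stackRows_conjTranspose_mul_self (A : CMat m n) (B : CMat k n) :
    (stackRows A B)ᴴ * stackRows A B = Aᴴ * A + Bᴴ * B := by
  rw [stackRows, conjTranspose_submatrix, submatrix_mul_equiv, submatrix_id_id,
    conjTranspose_fromRows_eq_fromCols_conjTranspose, fromCols_mul_fromRows]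

end Matrices

section Pairing

open scoped Kronecker

variable {W : Type*} [AddCommGroup W] [Module ℂ W] {r m n : ℕ}

lemma pairing_add (φ ψ : W →ₗ[ℂ] CMat n n) (a : Mat r W) :
    pairing (φ + ψ) a = pairing φ a + pairing ψ a := by
  ext; simp [pairing]

lemma pairing_smul (c : ℂ) (φ : W →ₗ[ℂ] CMat n n) (a : Mat r W) :
    pairing (c • φ) a = c • pairing φ a := by
  ext; simp [pairing]

lemma pairing_mapDSum (φ : W →ₗ[ℂ] CMat m m) (ψ : W →ₗ[ℂ] CMat n n) (a : Mat r W) :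
    pairing (mapDSum φ ψ) a =
      (fromBlocks (pairing φ a) 0 0 (pairing ψ a)).submatrix
        (fun x => (finSumFinEquiv.symm x.2).map (x.1, ·) (x.1, ·))
        (fun x => (finSumFinEquiv.symm x.2).map (x.1, ·) (x.1, ·)) := by
  ext ⟨p, i⟩ ⟨q, j⟩
  rcases h1 : finSumFinEquiv.symm i with i' | i' <;>
    rcases h2 : finSumFinEquiv.symm j with j' | j' <;>
    simp [pairing, mapDSum, dSum, h1, h2]

lemma pairing_mapCMul (β : CMat m n) (Φ : W →ₗ[ℂ] CMat m m) (a : Mat r W) :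
    pairing (mapCMul βᴴ Φ β) a =
      ((1 : CMat r r) ⊗ₖ β)ᴴ * pairing Φ a * ((1 : CMat r r) ⊗ₖ β) := by
  ext ⟨p, i⟩ ⟨q, j⟩
  simp [pairing, mapCMul, Matrix.mul_apply, Fintype.sum_prod_type, kroneckerMap_apply,
    one_apply, apply_ite (starRingEnd ℂ), ite_mul, Finset.sum_ite_eq']

lemma mapDSum_smul_sub (c : ℂ) (φ ψ : W →ₗ[ℂ] CMat m m) (φ' ψ' : W →ₗ[ℂ] CMat n n) :
    mapDSum (c • (φ - ψ)) (c • (φ' - ψ')) = c • (mapDSum φ φ' - mapDSum ψ ψ') := by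
  ext v i j
  rcases h1 : finSumFinEquiv.symm i with i' | i' <;>
    rcases h2 : finSumFinEquiv.symm j with j' | j' <;>
    simp [mapDSum, dSum, h1, h2]

end Pairing

namespace MOUS

variable {S : MOUS V} {m n : ℕ} {φ ψ : V →ₗ[ℂ] CMat n n}

lemma convexComb_mem_CS (hφ : φ ∈ S.CS n) (hψ : ψ ∈ S.CS n) {r : ℝ} (h0 : 0 ≤ r)
    (h1 : r ≤ 1) : (r : ℂ) • φ + ((1 - r : ℝ) : ℂ) • ψ ∈ S.CS n := by
  refine ⟨?_, fun k a ha => ?_⟩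
  · simp only [LinearMap.add_apply, LinearMap.smul_apply, hφ.1, hψ.1, ← add_smul]
    simp
  · rw [pairing_add, pairing_smul, pairing_smul]
    exact ((hφ.2 k a ha).smul (Complex.zero_le_real.2 h0)).add
      ((hψ.2 k a ha).smul (Complex.zero_le_real.2 (sub_nonneg.2 h1)))

lemma mapDSum_mem_CS {φ : V →ₗ[ℂ] CMat m m} (hφ : φ ∈ S.CS m) (hψ : ψ ∈ S.CS n) :
    mapDSum φ ψ ∈ S.CS (m + n) := by
  refine ⟨?_, fun k a ha => ?_⟩
  · change dSum (φ S.unit) (ψ S.unit) = 1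
    rw [hφ.1, hψ.1, dSum, fromBlocks_one, submatrix_one_equiv]
  · rw [pairing_mapDSum]
    exact (posSemidef_fromBlocks_zero (hφ.2 k a ha) (hψ.2 k a ha)).submatrix _

lemma mapCMul_mem_CS {Φ : V →ₗ[ℂ] CMat m m} (hΦ : Φ ∈ S.CS m) {β : CMat m n}
    (hβ : βᴴ * β = 1) : mapCMul βᴴ Φ β ∈ S.CS n := by
  refine ⟨?_, fun k a ha => ?_⟩
  · change βᴴ * Φ S.unit * β = 1
    rw [hΦ.1, Matrix.mul_one, hβ]
  · rw [pairing_mapCMul]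
    exact (hΦ.2 k a ha).conjTranspose_mul_mul_same _

lemma exists_smul_sub_eq_smul_sub_of_le (hφ : φ ∈ S.CS n) (hψ : ψ ∈ S.CS n) {t u : ℝ}
    (ht : 0 ≤ t) (htu : t ≤ u) : ∃ φ' ∈ S.CS n, (t : ℂ) • (φ - ψ) = (u : ℂ) • (φ' - ψ) := by
  rcases (ht.trans htu).eq_or_lt with rfl | hu
  · exact ⟨ψ, hψ, by rw [le_antisymm htu ht]; simp⟩
  · refine ⟨_, convexComb_mem_CS hφ hψ (div_nonneg ht hu.le) ((div_le_one hu).2 htu), ?_⟩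
    rw [show (t : ℂ) = u * (t / u : ℝ) by push_cast; field_simp]
    push_cast
    module

lemma exists_nonneg_of_mem_RSB {f : V →ₗ[ℂ] CMat n n} (hf : f ∈ RSB S n) :
    ∃ t : ℝ, 0 ≤ t ∧ ∃ φ ∈ S.CS n, ∃ ψ ∈ S.CS n, f = (t : ℂ) • (φ - ψ) := by
  obtain ⟨t, φ, hφ, ψ, hψ, rfl⟩ := hf
  rcases le_total 0 t with ht | ht
  · exact ⟨t, ht, φ, hφ, ψ, hψ, rfl⟩
  · exact ⟨-t, neg_nonneg.2 ht, ψ, hψ, φ, hφ, by push_cast; module⟩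

lemma exists_common_scale {f : V →ₗ[ℂ] CMat m m} {g : V →ₗ[ℂ] CMat n n} (hf : f ∈ RSB S m)
    (hg : g ∈ RSB S n) : ∃ u : ℝ, 0 ≤ u ∧ ∃ φ₁ ∈ S.CS m, ∃ ψ₁ ∈ S.CS m, ∃ φ₂ ∈ S.CS n,
      ∃ ψ₂ ∈ S.CS n, f = (u : ℂ) • (φ₁ - ψ₁) ∧ g = (u : ℂ) • (φ₂ - ψ₂) := by
  obtain ⟨t, ht, φ₁, hφ₁, ψ₁, hψ₁, rfl⟩ := exists_nonneg_of_mem_RSB hf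
  obtain ⟨s, hs, φ₂, hφ₂, ψ₂, hψ₂, rfl⟩ := exists_nonneg_of_mem_RSB hg
  obtain ⟨φ₁', hφ₁', hf'⟩ := exists_smul_sub_eq_smul_sub_of_le hφ₁ hψ₁ ht (le_max_left t s)
  obtain ⟨φ₂', hφ₂', hg'⟩ := exists_smul_sub_eq_smul_sub_of_le hφ₂ hψ₂ hs (le_max_right t s)
  exact ⟨max t s, ht.trans (le_max_left t s), φ₁', hφ₁', ψ₁, hψ₁, φ₂', hφ₂', ψ₂, hψ₂, hf', hg'⟩

end MOUS

namespace MatMetric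

variable {S : MOUS V} (Dm : MatMetric S) {m n : ℕ} {φ ψ φ' ψ' : V →ₗ[ℂ] CMat n n}

lemma D_self (hφ : φ ∈ S.CS n) : Dm.D n φ φ = 0 :=
  (Dm.eq_zero_iff n φ φ hφ hφ).2 rfl

lemma D_eq_of_sub_eq (hb : MMBalanced S Dm) (hφ : φ ∈ S.CS n) (hψ : ψ ∈ S.CS n)
    (hφ' : φ' ∈ S.CS n) (hψ' : ψ' ∈ S.CS n) (h : φ - ψ = φ' - ψ') :
    Dm.D n φ ψ = Dm.D n φ' ψ' :=
  hb n φ φ' ψ ψ' hφ hφ' hψ hψ' (by rw [sub_eq_sub_iff_add_eq_add.mp h])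

lemma D_convexComb_left (hc : MMConvex S Dm) (hφ : φ ∈ S.CS n) (hψ : ψ ∈ S.CS n) {r : ℝ}
    (h0 : 0 ≤ r) (h1 : r ≤ 1) :
    Dm.D n ((r : ℂ) • φ + ((1 - r : ℝ) : ℂ) • ψ) ψ = r * Dm.D n φ ψ := by
  have hχ := MOUS.convexComb_mem_CS hφ hψ h0 h1
  set χ := (r : ℂ) • φ + ((1 - r : ℝ) : ℂ) • ψ
  -- convexity bounds `D χ ψ` and `D φ χ` by `r D` and `(1 - r) D`; the triangle inequality
  -- `D φ ψ ≤ D φ χ + D χ ψ` forces equality in both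
  have hχψ := hc n ψ φ ψ hψ hφ hψ r h0 h1
  have hφχ := hc n φ φ ψ hφ hφ hψ r h0 h1
  have htri := Dm.triangle n φ χ ψ hφ hχ hψ
  rw [Dm.D_self hψ, Dm.symm n ψ φ hψ hφ, Dm.symm n ψ χ hψ hχ] at hχψ
  rw [Dm.D_self hφ] at hφχ
  linarith

lemma smul_D_eq_of_smul_sub_eq_of_le (hc : MMConvex S Dm) (hb : MMBalanced S Dm)
    (hφ : φ ∈ S.CS n) (hψ : ψ ∈ S.CS n) (hφ' : φ' ∈ S.CS n) (hψ' : ψ' ∈ S.CS n) {t s : ℝ}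
    (hs : 0 ≤ s) (hst : s ≤ t) (h : (t : ℂ) • (φ - ψ) = (s : ℂ) • (φ' - ψ')) :
    t * Dm.D n φ ψ = s * Dm.D n φ' ψ' := by
  rcases (hs.trans hst).eq_or_lt with rfl | ht
  · rw [le_antisymm hst hs, zero_mul, zero_mul]
  · have hr0 : 0 ≤ s / t := div_nonneg hs ht.le
    have hr1 : s / t ≤ 1 := (div_le_one ht).2 hst
    have hsub : φ - ψ = ((s / t : ℝ) : ℂ) • φ' + ((1 - s / t : ℝ) : ℂ) • ψ' - ψ' := by
      apply smul_right_injective _ (Complex.ofReal_ne_zero.2 ht.ne')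
      simp only [h]
      rw [show (s : ℂ) = t * (s / t : ℝ) by push_cast; field_simp]
      push_cast
      module
    rw [Dm.D_eq_of_sub_eq hb hφ hψ (MOUS.convexComb_mem_CS hφ' hψ' hr0 hr1) hψ' hsub,
      Dm.D_convexComb_left hc hφ' hψ' hr0 hr1, ← mul_assoc, mul_div_cancel₀ _ ht.ne']

lemma smul_D_eq_of_smul_sub_eq (hc : MMConvex S Dm) (hb : MMBalanced S Dm)
    (hφ : φ ∈ S.CS n) (hψ : ψ ∈ S.CS n) (hφ' : φ' ∈ S.CS n) (hψ' : ψ' ∈ S.CS n) {t s : ℝ}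
    (ht : 0 ≤ t) (hs : 0 ≤ s) (h : (t : ℂ) • (φ - ψ) = (s : ℂ) • (φ' - ψ')) :
    t * Dm.D n φ ψ = s * Dm.D n φ' ψ' := by
  rcases le_total s t with hst | hts
  · exact Dm.smul_D_eq_of_smul_sub_eq_of_le hc hb hφ hψ hφ' hψ' hs hst h
  · exact (Dm.smul_D_eq_of_smul_sub_eq_of_le hc hb hφ' hψ' hφ hψ ht hts h.symm).symm

lemma exists_compression {α : CMat m n} (hα : opNorm α ≤ 1) {χ : V →ₗ[ℂ] CMat n n}
    (hχ : χ ∈ S.CS n) {φ ψ : V →ₗ[ℂ] CMat m m} (hφ : φ ∈ S.CS m) (hψ : ψ ∈ S.CS m) :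
    ∃ Φ ∈ S.CS n, ∃ Ψ ∈ S.CS n,
      Φ - Ψ = mapCMul αᴴ (φ - ψ) α ∧ Dm.D n Φ Ψ ≤ Dm.D m φ ψ := by
  obtain ⟨γ, hγ⟩ := exists_conjTranspose_mul_add_eq_one α hα
  have hβ : (stackRows α γ)ᴴ * stackRows α γ = 1 := by
    rw [stackRows_conjTranspose_mul_self, hγ]
  have hφχ := MOUS.mapDSum_mem_CS hφ hχ
  have hψχ := MOUS.mapDSum_mem_CS hψ hχ
  refine ⟨_, MOUS.mapCMul_mem_CS hφχ hβ, _, MOUS.mapCMul_mem_CS hψχ hβ, ?_, ?_⟩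
  · ext1 v
    change (stackRows α γ)ᴴ * dSum (φ v) (χ v) * stackRows α γ
      - (stackRows α γ)ᴴ * dSum (ψ v) (χ v) * stackRows α γ = αᴴ * (φ v - ψ v) * α
    rw [stackRows_conjTranspose_mul_dSum_mul, stackRows_conjTranspose_mul_dSum_mul,
      Matrix.mul_sub, Matrix.sub_mul]
    abel
  · calc _ ≤ Dm.D (m + n) (mapDSum φ χ) (mapDSum ψ χ) :=
          Dm.conj_le _ _ _ hβ _ _ hφχ hψχ
      _ = Dm.D m φ ψ := by
          rw [Dm.dsum_eq m n φ ψ χ χ hφ hψ hχ hχ, Dm.D_self hχ,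
            max_eq_left (Dm.nonneg m φ ψ hφ hψ)]

end MatMetric

/-- The norm `Q''ₙ`. On `RSB S n` the set is the singleton `{t Dₙ(φ, ψ)}` by
`MatMetric.smul_D_eq_of_smul_sub_eq`. -/
def rsbNorm (S : MOUS V) (Dm : MatMetric S) (n : ℕ) (f : V →ₗ[ℂ] CMat n n) : ℝ :=
  sInf {x | ∃ t : ℝ, 0 ≤ t ∧ ∃ φ ∈ S.CS n, ∃ ψ ∈ S.CS n,
    f = (t : ℂ) • (φ - ψ) ∧ x = t * Dm.D n φ ψ}

section rsbNorm

variable {S : MOUS V} {Dm : MatMetric S} {m n : ℕ}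

lemma rsbNorm_smul_sub (hc : MMConvex S Dm) (hb : MMBalanced S Dm) {t : ℝ} (ht : 0 ≤ t)
    {φ ψ : V →ₗ[ℂ] CMat n n} (hφ : φ ∈ S.CS n) (hψ : ψ ∈ S.CS n) :
    rsbNorm S Dm n ((t : ℂ) • (φ - ψ)) = t * Dm.D n φ ψ := by
  rw [rsbNorm, ← csInf_singleton (t * Dm.D n φ ψ)]
  congr 1
  refine Set.eq_singleton_iff_unique_mem.2 ⟨⟨t, ht, φ, hφ, ψ, hψ, rfl, rfl⟩, ?_⟩
  rintro x ⟨s, hs, φ', hφ', ψ', hψ', h, rfl⟩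
  exact Dm.smul_D_eq_of_smul_sub_eq hc hb hφ' hψ' hφ hψ hs ht h.symm

lemma rsbNorm_of_CS_eq_empty (h : S.CS n = ∅) (f : V →ₗ[ℂ] CMat n n) :
    rsbNorm S Dm n f = 0 := by
  simp [rsbNorm, h]

lemma rsbNorm_nonneg (hc : MMConvex S Dm) (hb : MMBalanced S Dm) {f : V →ₗ[ℂ] CMat n n}
    (hf : f ∈ RSB S n) : 0 ≤ rsbNorm S Dm n f := by
  obtain ⟨t, ht, φ, hφ, ψ, hψ, rfl⟩ := MOUS.exists_nonneg_of_mem_RSB hf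
  rw [rsbNorm_smul_sub hc hb ht hφ hψ]
  exact mul_nonneg ht (Dm.nonneg n φ ψ hφ hψ)

lemma eq_zero_of_rsbNorm_eq_zero (hc : MMConvex S Dm) (hb : MMBalanced S Dm)
    {f : V →ₗ[ℂ] CMat n n} (hf : f ∈ RSB S n) (h0 : rsbNorm S Dm n f = 0) : f = 0 := by
  obtain ⟨t, ht, φ, hφ, ψ, hψ, rfl⟩ := MOUS.exists_nonneg_of_mem_RSB hf
  rw [rsbNorm_smul_sub hc hb ht hφ hψ] at h0
  rcases mul_eq_zero.1 h0 with rfl | h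
  · simp
  · rw [(Dm.eq_zero_iff n φ ψ hφ hψ).1 h, sub_self, smul_zero]

lemma rsbNorm_real_smul (hc : MMConvex S Dm) (hb : MMBalanced S Dm) (t : ℝ)
    {f : V →ₗ[ℂ] CMat n n} (hf : f ∈ RSB S n) :
    rsbNorm S Dm n ((t : ℂ) • f) = |t| * rsbNorm S Dm n f := by
  obtain ⟨s, hs, φ, hφ, ψ, hψ, rfl⟩ := MOUS.exists_nonneg_of_mem_RSB hf
  rw [rsbNorm_smul_sub hc hb hs hφ hψ]
  rcases le_total 0 t with ht | ht
  · rw [smul_smul, ← Complex.ofReal_mul, rsbNorm_smul_sub hc hb (mul_nonneg ht hs) hφ hψ,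
      abs_of_nonneg ht, mul_assoc]
  · rw [show (t : ℂ) • (s : ℂ) • (φ - ψ) = ((-t * s : ℝ) : ℂ) • (ψ - φ) by push_cast; module,
      rsbNorm_smul_sub hc hb (mul_nonneg (neg_nonneg.2 ht) hs) hψ hφ, Dm.symm n ψ φ hψ hφ,
      abs_of_nonpos ht, mul_assoc]

lemma rsbNorm_add_le (hc : MMConvex S Dm) (hb : MMBalanced S Dm) {f g : V →ₗ[ℂ] CMat n n}
    (hf : f ∈ RSB S n) (hg : g ∈ RSB S n) :
    rsbNorm S Dm n (f + g) ≤ rsbNorm S Dm n f + rsbNorm S Dm n g := by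
  obtain ⟨u, hu, φ₁, hφ₁, ψ₁, hψ₁, φ₂, hφ₂, ψ₂, hψ₂, rfl, rfl⟩ := MOUS.exists_common_scale hf hg
  set Φ := ((1 / 2 : ℝ) : ℂ) • φ₁ + ((1 - 1 / 2 : ℝ) : ℂ) • φ₂
  set Z := ((1 / 2 : ℝ) : ℂ) • φ₁ + ((1 - 1 / 2 : ℝ) : ℂ) • ψ₂
  set Ψ := ((1 / 2 : ℝ) : ℂ) • ψ₁ + ((1 - 1 / 2 : ℝ) : ℂ) • ψ₂
  have hΦ : Φ ∈ S.CS n := MOUS.convexComb_mem_CS hφ₁ hφ₂ (by norm_num) (by norm_num)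
  have hZ : Z ∈ S.CS n := MOUS.convexComb_mem_CS hφ₁ hψ₂ (by norm_num) (by norm_num)
  have hΨ : Ψ ∈ S.CS n := MOUS.convexComb_mem_CS hψ₁ hψ₂ (by norm_num) (by norm_num)
  have h2u : 0 ≤ 2 * u := by positivity
  have hsum : (u : ℂ) • (φ₁ - ψ₁) + (u : ℂ) • (φ₂ - ψ₂) = ((2 * u : ℝ) : ℂ) • (Φ - Ψ) := by
    simp only [Φ, Ψ]; push_cast; module
  have hf' : (u : ℂ) • (φ₁ - ψ₁) = ((2 * u : ℝ) : ℂ) • (Z - Ψ) := by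
    simp only [Z, Ψ]; push_cast; module
  have hg' : (u : ℂ) • (φ₂ - ψ₂) = ((2 * u : ℝ) : ℂ) • (Φ - Z) := by
    simp only [Φ, Z]; push_cast; module
  rw [hsum, hf', hg', rsbNorm_smul_sub hc hb h2u hΦ hΨ, rsbNorm_smul_sub hc hb h2u hZ hΨ,
    rsbNorm_smul_sub hc hb h2u hΦ hZ]
  nlinarith [Dm.triangle n Φ Z Ψ hΦ hZ hΨ]

lemma rsbNorm_mapDSum (hc : MMConvex S Dm) (hb : MMBalanced S Dm) {f : V →ₗ[ℂ] CMat m m}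
    {g : V →ₗ[ℂ] CMat n n} (hf : f ∈ RSB S m) (hg : g ∈ RSB S n) :
    rsbNorm S Dm (m + n) (mapDSum f g) = max (rsbNorm S Dm m f) (rsbNorm S Dm n g) := by
  obtain ⟨u, hu, φ₁, hφ₁, ψ₁, hψ₁, φ₂, hφ₂, ψ₂, hψ₂, rfl, rfl⟩ := MOUS.exists_common_scale hf hg
  rw [mapDSum_smul_sub, rsbNorm_smul_sub hc hb hu (MOUS.mapDSum_mem_CS hφ₁ hφ₂)
      (MOUS.mapDSum_mem_CS hψ₁ hψ₂), Dm.dsum_eq m n φ₁ ψ₁ φ₂ ψ₂ hφ₁ hψ₁ hφ₂ hψ₂,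
    rsbNorm_smul_sub hc hb hu hφ₁ hψ₁, rsbNorm_smul_sub hc hb hu hφ₂ hψ₂, mul_max_of_nonneg _ _ hu]

lemma rsbNorm_mapCMul_le (hc : MMConvex S Dm) (hb : MMBalanced S Dm) (α : CMat m n)
    {f : V →ₗ[ℂ] CMat m m} (hf : f ∈ RSB S m) :
    rsbNorm S Dm n (mapCMul αᴴ f α) ≤ opNorm α ^ 2 * rsbNorm S Dm m f := by
  obtain ⟨t, ht, φ, hφ, ψ, hψ, rfl⟩ := MOUS.exists_nonneg_of_mem_RSB hf
  rcases (S.CS n).eq_empty_or_nonempty with hCS | ⟨χ, hχ⟩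
  · rw [rsbNorm_of_CS_eq_empty hCS]
    exact mul_nonneg (sq_nonneg _) (rsbNorm_nonneg hc hb hf)
  obtain ⟨α', hα', hαα'⟩ := exists_eq_opNorm_smul α
  obtain ⟨Φ, hΦ, Ψ, hΨ, hsub, hD⟩ := Dm.exists_compression hα' hχ hφ hψ
  set c := opNorm α
  clear_value c
  subst hαα'
  have hrep : mapCMul ((c : ℂ) • α')ᴴ ((t : ℂ) • (φ - ψ)) ((c : ℂ) • α')
      = ((t * c ^ 2 : ℝ) : ℂ) • (Φ - Ψ) := by
    rw [hsub]
    ext v : 1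
    simp only [mapCMul, Complex.coe_smul, conjTranspose_smul, star_trivial, LinearMap.smul_apply,
      LinearMap.sub_apply, Matrix.mul_smul, smul_mul, LinearMap.coe_mk, AddHom.coe_mk,
      Complex.ofReal_mul, Complex.ofReal_pow]
    module
  rw [hrep, rsbNorm_smul_sub hc hb (by positivity) hΦ hΨ, rsbNorm_smul_sub hc hb ht hφ hψ]
  calc t * c ^ 2 * Dm.D n Φ Ψ ≤ t * c ^ 2 * Dm.D m φ ψ :=
        mul_le_mul_of_nonneg_left hD (by positivity)
    _ = c ^ 2 * (t * Dm.D m φ ψ) := by ring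

end rsbNorm

theorem exists_norm_on_RSB_general (S : MOUS V) (Dm : MatMetric S)
    (h1 : MMConvex S Dm) (h2 : MMBalanced S Dm) :
    ∃ Q : ∀ n, (V →ₗ[ℂ] CMat n n) → ℝ,
      (∀ n (f g : V →ₗ[ℂ] CMat n n), f ∈ RSB S n → g ∈ RSB S n →
        Q n (f + g) ≤ Q n f + Q n g) ∧
      (∀ n (t : ℝ) (f : V →ₗ[ℂ] CMat n n), f ∈ RSB S n →
        Q n ((t : ℂ) • f) = |t| * Q n f) ∧
      (∀ n (f : V →ₗ[ℂ] CMat n n), f ∈ RSB S n → 0 ≤ Q n f) ∧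
      (∀ n (f : V →ₗ[ℂ] CMat n n), f ∈ RSB S n → Q n f = 0 → f = 0) ∧
      (∀ m n (α : CMat m n) (f : V →ₗ[ℂ] CMat m m), f ∈ RSB S m →
        Q n (mapCMul αᴴ f α) ≤ opNorm α ^ 2 * Q m f) ∧
      (∀ m n (f : V →ₗ[ℂ] CMat m m) (g : V →ₗ[ℂ] CMat n n), f ∈ RSB S m → g ∈ RSB S n →
        Q (m + n) (mapDSum f g) = max (Q m f) (Q n g)) ∧
      (∀ n (φ ψ : V →ₗ[ℂ] CMat n n), φ ∈ S.CS n → ψ ∈ S.CS n →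
        Q n (φ - ψ) = Dm.D n φ ψ) :=
  ⟨rsbNorm S Dm,
    fun _ _ _ hf hg => rsbNorm_add_le h1 h2 hf hg,
    fun _ t _ hf => rsbNorm_real_smul h1 h2 t hf,
    fun _ _ hf => rsbNorm_nonneg h1 h2 hf,
    fun _ _ hf => eq_zero_of_rsbNorm_eq_zero h1 h2 hf,
    fun _ _ α _ hf => rsbNorm_mapCMul_le h1 h2 α hf,
    fun _ _ _ _ hf hg => rsbNorm_mapDSum h1 h2 hf hg,
    fun n φ ψ hφ hψ => by simpa using rsbNorm_smul_sub (n := n) h1 h2 zero_le_one hφ hψ⟩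

/-- if a matrix metric `D` on `CS(V)` is convex, midpoint balanced and midpoint
concave, then there is a norm `Q''ₙ` on each real vector space `ℝ·SBₙ²(Ṽ)` with
`Q''ₙ(α*fα) ≤ ‖α‖²·Q''ₘ(f)`, `Q''_{m+n}(f ⊕ g) = max{Q''ₘ(f), Q''ₙ(g)}`, and
`Q''ₙ(φ - ψ) = Dₙ(φ, ψ)` for all matrix states `φ, ψ`. -/
theorem exists_norm_on_RSB (S : MOUS V) (Dm : MatMetric S)
    (h1 : MMConvex S Dm) (h2 : MMBalanced S Dm) (h3 : MMConcave S Dm) :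
    ∃ Q : ∀ n, (V →ₗ[ℂ] CMat n n) → ℝ,
      (∀ n (f g : V →ₗ[ℂ] CMat n n), f ∈ RSB S n → g ∈ RSB S n →
        Q n (f + g) ≤ Q n f + Q n g) ∧
      (∀ n (t : ℝ) (f : V →ₗ[ℂ] CMat n n), f ∈ RSB S n →
        Q n ((t : ℂ) • f) = |t| * Q n f) ∧
      (∀ n (f : V →ₗ[ℂ] CMat n n), f ∈ RSB S n → 0 ≤ Q n f) ∧
      (∀ n (f : V →ₗ[ℂ] CMat n n), f ∈ RSB S n → Q n f = 0 → f = 0) ∧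
      (∀ m n (α : CMat m n) (f : V →ₗ[ℂ] CMat m m), f ∈ RSB S m →
        Q n (mapCMul αᴴ f α) ≤ opNorm α ^ 2 * Q m f) ∧
      (∀ m n (f : V →ₗ[ℂ] CMat m m) (g : V →ₗ[ℂ] CMat n n), f ∈ RSB S m → g ∈ RSB S n →
        Q (m + n) (mapDSum f g) = max (Q m f) (Q n g)) ∧
      (∀ n (φ ψ : V →ₗ[ℂ] CMat n n), φ ∈ S.CS n → ψ ∈ S.CS n →
        Q n (φ - ψ) = Dm.D n φ ψ) :=
  exists_norm_on_RSB_general S Dm h1 h2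
end
end

section
/- Let (V,1) be a matrix order unit space and D = (Dₙ) a matrix metric on CS(V) that is convex, midpoint balanced and midpoint concave, with the D-topology agreeing with the BW-topology, and let Kₙ = {F ∈ A(CS(V), Mₙ) : L_{Dₙ}(F) < +∞}. If L^c_{Dₙ}(φ − ψ) = Dₙ(φ,ψ) for all φ, ψ ∈ CSₙ(V) and all n, then L_D = (L_{Dₙ}) is a lower semicontinuous matrix Lip-norm on the matrix order unit space (K₁, I). -/
open scoped ENNReal ComplexOrder
open Matrix

noncomputable section

variable {V : Type*} [AddCommGroup V] [Module ℂ V] [StarAddMonoid V] [StarModule ℂ V]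

/-- The BW-topology on `CSₙ(V)`: the topology of pointwise (weak*) convergence. -/
def bwTop (S : MOUS V) (n : ℕ) : TopologicalSpace ↥(S.CS n) :=
  TopologicalSpace.induced (fun φ : ↥(S.CS n) => ⇑(φ : V →ₗ[ℂ] CMat n n)) Pi.topologicalSpace

/-- The topology on a subset `K` induced by a (real-valued) metric `d`. -/
def dTop {X : Type*} (K : Set X) (d : X → X → ℝ) : TopologicalSpace ↥K :=
  TopologicalSpace.generateFrom
    {U : Set ↥K | ∃ x : ↥K, ∃ ε : ℝ, 0 < ε ∧ U = {y : ↥K | d (x : X) (y : X) < ε}}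

/-- The topology on a subset `K` induced by an `ℝ≥0∞`-valued metric `d`. -/
def dTopE {X : Type*} (K : Set X) (d : X → X → ℝ≥0∞) : TopologicalSpace ↥K :=
  TopologicalSpace.generateFrom
    {U : Set ↥K | ∃ x : ↥K, ∃ ε : ℝ≥0∞, 0 < ε ∧ U = {y : ↥K | d (x : X) (y : X) < ε}}

/-- The compression `γ* φ γ` of a map `φ : V → Mₘ` by a scalar matrix `γ ∈ M_{m,n}`. -/
def stateConj {m n : ℕ} (γ : CMat m n) (φ : V →ₗ[ℂ] CMat m m) : V →ₗ[ℂ] CMat n n :=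
  mapCMul γᴴ φ γ

/-- The compression `(γ ⊗ 1_k)* M (γ ⊗ 1_k)` of a matrix `M ∈ Mₘ(M_k)`. -/
def ampConj {k m N : ℕ} (γ : CMat m N) (M : Matrix (Fin m × Fin k) (Fin m × Fin k) ℂ) :
    Matrix (Fin N × Fin k) (Fin N × Fin k) ℂ :=
  Matrix.of fun p q => ∑ i, ∑ j, star (γ i p.1) * M (i, p.2) (j, q.2) * γ j q.1

/-- An element of `A(CS(V), M_k)`: a matrix affine mapping `F = (Fₙ) : CS(V) → M_k` such that
`F₁` is BW-continuous. -/
structure MatAffine (S : MOUS V) (k : ℕ) where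
  F : ∀ n, (V →ₗ[ℂ] CMat n n) → Matrix (Fin n × Fin k) (Fin n × Fin k) ℂ
  affine : ∀ (N p : ℕ) (ni : Fin p → ℕ) (φ : ∀ i, V →ₗ[ℂ] CMat (ni i) (ni i))
      (γ : ∀ i, CMat (ni i) N), (∀ i, φ i ∈ S.CS (ni i)) →
      (∑ i, (γ i)ᴴ * γ i) = 1 →
      F N (∑ i, stateConj (γ i) (φ i)) = ∑ i, ampConj (γ i) (F (ni i) (φ i))
  cont : @Continuous ↥(S.CS 1) (Matrix (Fin 1 × Fin k) (Fin 1 × Fin k) ℂ) (bwTop S 1) _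
      (fun φ => F 1 (φ : V →ₗ[ℂ] CMat 1 1))

/-- The Lipschitz gauge `L_{D_k}` on `A(CS(V), M_k)` induced by a matrix metric `D`. -/
def LD (S : MOUS V) (Dm : MatMetric S) {k : ℕ} (F : MatAffine S k) : ℝ≥0∞ :=
  ⨆ (r : ℕ) (φ : V →ₗ[ℂ] CMat r r) (_ : φ ∈ S.CS r) (ψ : V →ₗ[ℂ] CMat r r)
    (_ : ψ ∈ S.CS r) (_ : φ ≠ ψ),
    ENNReal.ofReal (opNorm (F.F r φ - F.F r ψ)) / ENNReal.ofReal (Dm.D r φ ψ)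

/-- `Kₙ = {F ∈ A(CS(V), Mₙ) : L_{Dₙ}(F) < ∞}`. -/
def Kset (S : MOUS V) (Dm : MatMetric S) (k : ℕ) : Set (MatAffine S k) :=
  {F | LD S Dm F ≠ ⊤}

/-- Block-diagonal direct sum in the target: `M ⊕ N ∈ M_r(M_{m+k})` of `M ∈ M_r(Mₘ)` and
`N ∈ M_r(M_k)`. -/
def dsumAmp {r m k : ℕ} (M : Matrix (Fin r × Fin m) (Fin r × Fin m) ℂ)
    (N : Matrix (Fin r × Fin k) (Fin r × Fin k) ℂ) :
    Matrix (Fin r × Fin (m + k)) (Fin r × Fin (m + k)) ℂ :=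
  Matrix.of fun p q =>
    Sum.elim
      (fun a => Sum.elim (fun b => M (p.1, a) (q.1, b)) (fun _ => 0) (finSumFinEquiv.symm q.2))
      (fun a => Sum.elim (fun _ => (0 : ℂ)) (fun b => N (p.1, a) (q.1, b)) (finSumFinEquiv.symm q.2))
      (finSumFinEquiv.symm p.2)

/-- The product `(α ⊗ 1_r) M (β ⊗ 1_r)` for `M ∈ M_r(Mₘ)`, `α ∈ M_{k,m}`, `β ∈ M_{m,k}`. -/
def ampMul {r m k : ℕ} (α : CMat k m) (M : Matrix (Fin r × Fin m) (Fin r × Fin m) ℂ)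
    (β : CMat m k) : Matrix (Fin r × Fin k) (Fin r × Fin k) ℂ :=
  Matrix.of fun p q => ∑ i, ∑ j, α p.2 i * M (p.1, i) (q.1, j) * β j q.2

/-- A scalar element `1_r ⊗ c ∈ Mₙ(ℂ·I)` evaluated at level `r`. -/
def scalarAmp {k : ℕ} (r : ℕ) (c : CMat k k) :
    Matrix (Fin r × Fin k) (Fin r × Fin k) ℂ :=
  Matrix.of fun p q => if p.1 = q.1 then c p.2 q.2 else 0

/-- `L^c_{Dₙ}(φ - ψ)`, i.e. the metric `D_{L_{Dₙ}}` on `CSₙ(K₁) ≅ CSₙ(V)` induced by the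
Lipschitz gauge `L_D` on `A(CS(V))`. -/
def DD (S : MOUS V) (Dm : MatMetric S) (n : ℕ) (φ ψ : V →ₗ[ℂ] CMat n n) : ℝ≥0∞ :=
  ⨆ (r : ℕ) (F : MatAffine S r) (_ : LD S Dm F ≤ 1),
    ENNReal.ofReal (opNorm (F.F n φ - F.F n ψ))

/-- `L_D = (L_{Dₙ})` is a lower semicontinuous matrix Lip-norm on the matrix order unit space
`(K₁, I)` (whose matrix levels are `Kₙ ⊆ A(CS(V), Mₙ)`, with `Mₙ(K₁)` identified with `Kₙ`):
it is a matrix Lipschitz seminorm (finite on `K`, null space `Mₙ(ℂI)`, compatible with direct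
sums, products by scalar matrices and the involution), it is lower semicontinuous for the
norm of `A(CS(V))`, and the metric topology it induces on the matrix state space
`CS(K₁) ≅ CS(V)` agrees with the BW-topology. -/
def IsLipNormOnK (S : MOUS V) (Dm : MatMetric S) : Prop :=
  -- subadditivity
  (∀ k (F G H : MatAffine S k),
    (∀ r (φ : V →ₗ[ℂ] CMat r r), φ ∈ S.CS r → H.F r φ = F.F r φ + G.F r φ) →
    LD S Dm H ≤ LD S Dm F + LD S Dm G) ∧
  -- homogeneity
  (∀ k (c : ℂ) (F H : MatAffine S k),
    (∀ r (φ : V →ₗ[ℂ] CMat r r), φ ∈ S.CS r → H.F r φ = c • F.F r φ) →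
    LD S Dm H = (‖c‖₊ : ℝ≥0∞) * LD S Dm F) ∧
  -- the null space is Mₙ(ℂ·I)
  (∀ k (F : MatAffine S k), LD S Dm F = 0 ↔
    ∃ c : CMat k k, ∀ r (φ : V →ₗ[ℂ] CMat r r), φ ∈ S.CS r → F.F r φ = scalarAmp r c) ∧
  -- direct sums
  (∀ m k (F : MatAffine S m) (G : MatAffine S k) (H : MatAffine S (m + k)),
    (∀ r (φ : V →ₗ[ℂ] CMat r r), φ ∈ S.CS r →
      H.F r φ = dsumAmp (F.F r φ) (G.F r φ)) →
    LD S Dm H = max (LD S Dm F) (LD S Dm G)) ∧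
  -- products with scalar matrices
  (∀ m k (α : CMat k m) (β : CMat m k) (F : MatAffine S m) (H : MatAffine S k),
    (∀ r (φ : V →ₗ[ℂ] CMat r r), φ ∈ S.CS r → H.F r φ = ampMul α (F.F r φ) β) →
    LD S Dm H ≤ ENNReal.ofReal (opNorm α) * LD S Dm F * ENNReal.ofReal (opNorm β)) ∧
  -- the involution
  (∀ k (F H : MatAffine S k),
    (∀ r (φ : V →ₗ[ℂ] CMat r r), φ ∈ S.CS r → H.F r φ = (F.F r φ)ᴴ) →
    LD S Dm H = LD S Dm F) ∧
  -- lower semicontinuity (level sets are closed for the norm of A(CS(V)))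
  (∀ k (t : ℝ), 0 < t → ∀ F : MatAffine S k,
    (∀ ε : ℝ, 0 < ε → ∃ G : MatAffine S k, LD S Dm G ≤ ENNReal.ofReal t ∧
      ∀ r (φ : V →ₗ[ℂ] CMat r r), φ ∈ S.CS r → opNorm (F.F r φ - G.F r φ) ≤ ε) →
    LD S Dm F ≤ ENNReal.ofReal t) ∧
  -- the D_{L_D}-topology on the matrix state space agrees with the BW-topology
  (∀ n, dTopE (S.CS n) (DD S Dm n) = bwTop S n)

/-! All axioms of a matrix Lip-norm for `L_D`, except the one on the null space, are pointwise
properties of the operator norm of the differences `F(φ) - F(ψ)`: the triangle inequality,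
homogeneity, `‖M ⊕ N‖ = max ‖M‖ ‖N‖`, `‖αMβ‖ ≤ ‖α‖‖M‖‖β‖`, `‖M*‖ = ‖M‖`, and closedness of
`{M : ‖M‖ ≤ t D}` under uniform approximation. If `L_D(F) = 0`, then `F` is constant on each
`CSᵣ(V)`; compressing a state by a unit vector `ξ` and using that `F` is matrix affine, every
compression `ξ* Fᵣ(φ) ξ` equals one fixed matrix, and polarization forces `Fᵣ(φ) = 1ᵣ ⊗ c`.
Finally the hypothesis `L^c_D = D` says that the metric `D_{L_D}` is `D` itself, whose topology
is the BW-topology by assumption. -/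

namespace EuclideanSpace

variable {𝕜 : Type*} [RCLike 𝕜] {I J : Type*} [Fintype I] [Fintype J]

theorem norm_toLp_sum_sq (x : I ⊕ J → 𝕜) :
    ‖(WithLp.toLp 2 x : EuclideanSpace 𝕜 (I ⊕ J))‖ ^ 2 =
      ‖(WithLp.toLp 2 (x ∘ Sum.inl) : EuclideanSpace 𝕜 I)‖ ^ 2 +
        ‖(WithLp.toLp 2 (x ∘ Sum.inr) : EuclideanSpace 𝕜 J)‖ ^ 2 := by
  simp [EuclideanSpace.norm_sq_eq, Fintype.sum_sum_type]

theorem norm_toLp_prod_sq (x : I × J → 𝕜) :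
    ‖(WithLp.toLp 2 x : EuclideanSpace 𝕜 (I × J))‖ ^ 2 =
      ∑ i, ‖(WithLp.toLp 2 (fun j => x (i, j)) : EuclideanSpace 𝕜 J)‖ ^ 2 := by
  simp [EuclideanSpace.norm_sq_eq, Fintype.sum_prod_type]

end EuclideanSpace

namespace Matrix

open scoped Matrix.Norms.L2Operator Kronecker

variable {𝕜 : Type*} [RCLike 𝕜] {I J I' J' : Type*} [Fintype I] [Fintype J] [Fintype I']
  [Fintype J'] [DecidableEq J]

theorem l2_opNorm_mulVec_toLp (A : Matrix I J 𝕜) (x : J → 𝕜) :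
    ‖(WithLp.toLp 2 (A *ᵥ x) : EuclideanSpace 𝕜 I)‖ ≤
      ‖A‖ * ‖(WithLp.toLp 2 x : EuclideanSpace 𝕜 J)‖ :=
  A.l2_opNorm_mulVec (WithLp.toLp 2 x)

theorem l2_opNorm_le_of_mulVec {A : Matrix I J 𝕜} {C : ℝ} (hC : 0 ≤ C)
    (h : ∀ x : J → 𝕜, ‖(WithLp.toLp 2 (A *ᵥ x) : EuclideanSpace 𝕜 I)‖ ^ 2 ≤
      C ^ 2 * ‖(WithLp.toLp 2 x : EuclideanSpace 𝕜 J)‖ ^ 2) : ‖A‖ ≤ C := by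
  rw [l2_opNorm_def]
  refine ContinuousLinearMap.opNorm_le_bound _ hC fun x => ?_
  rw [← sq_le_sq₀ (norm_nonneg _) (by positivity), mul_pow]
  exact h x.ofLp

theorem l2_opNorm_one_kronecker_le {ι : Type*} [Fintype ι] [DecidableEq ι] (A : Matrix I J 𝕜) :
    ‖(1 : Matrix ι ι 𝕜) ⊗ₖ A‖ ≤ ‖A‖ := by
  refine l2_opNorm_le_of_mulVec (norm_nonneg _) fun x => ?_
  have hrow : ∀ i, (fun a => ((1 : Matrix ι ι 𝕜) ⊗ₖ A *ᵥ x) (i, a)) = A *ᵥ fun b => x (i, b) := by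
    intro i; ext a
    simp [mulVec, dotProduct, Fintype.sum_prod_type, one_apply, ite_mul]
  rw [EuclideanSpace.norm_toLp_prod_sq, EuclideanSpace.norm_toLp_prod_sq x, Finset.mul_sum]
  refine Finset.sum_le_sum fun i _ => ?_
  rw [hrow, ← mul_pow]
  exact pow_le_pow_left₀ (norm_nonneg _) (l2_opNorm_mulVec_toLp A _) 2

variable [DecidableEq I] [DecidableEq I'] [DecidableEq J']

theorem l2_opNorm_one_submatrix_le {e : I' → I} (he : Function.Injective e) :
    ‖(1 : Matrix I I 𝕜).submatrix e id‖ ≤ 1 := by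
  set P := (1 : Matrix I I 𝕜).submatrix e id
  have hP : P * Pᴴ = 1 := by
    ext i j
    simp [P, mul_apply, one_apply, he.eq_iff]
  have hone : ‖(1 : Matrix I' I' 𝕜)‖ ≤ 1 := by
    rw [← diagonal_one, l2_opNorm_diagonal]
    exact pi_norm_le_iff_of_nonneg zero_le_one |>.mpr fun _ => by simp
  have hsq := l2_opNorm_conjTranspose_mul_self Pᴴ
  rw [conjTranspose_conjTranspose, hP, l2_opNorm_conjTranspose] at hsq
  nlinarith [norm_nonneg P]

theorem l2_opNorm_submatrix_le (M : Matrix I J 𝕜) {e : I' → I} {f : J' → J}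
    (he : Function.Injective e) (hf : Function.Injective f) : ‖M.submatrix e f‖ ≤ ‖M‖ := by
  have hM : M.submatrix e f =
      (1 : Matrix I I 𝕜).submatrix e id * M * ((1 : Matrix J J 𝕜).submatrix f id)ᴴ := by
    ext i j
    simp [mul_apply, one_apply]
  rw [hM]
  calc _ ≤ ‖(1 : Matrix I I 𝕜).submatrix e id‖ * ‖M‖ *
        ‖((1 : Matrix J J 𝕜).submatrix f id)ᴴ‖ :=
        (l2_opNorm_mul _ _).trans (by gcongr; exact l2_opNorm_mul _ _)
    _ ≤ 1 * ‖M‖ * 1 := by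
        rw [l2_opNorm_conjTranspose]
        gcongr
        exacts [l2_opNorm_one_submatrix_le he, l2_opNorm_one_submatrix_le hf]
    _ = ‖M‖ := by ring

theorem l2_opNorm_submatrix_equiv (M : Matrix I J 𝕜) (e : I' ≃ I) (f : J' ≃ J) :
    ‖M.submatrix e f‖ = ‖M‖ := by
  refine le_antisymm (l2_opNorm_submatrix_le M e.injective f.injective) ?_
  simpa using l2_opNorm_submatrix_le (M.submatrix e f) e.symm.injective f.symm.injective

theorem l2_opNorm_fromBlocks_zero (A : Matrix I J 𝕜) (B : Matrix I' J' 𝕜) :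
    ‖fromBlocks A 0 0 B‖ = max ‖A‖ ‖B‖ := by
  refine le_antisymm (l2_opNorm_le_of_mulVec (by positivity) fun x => ?_) (max_le ?_ ?_)
  · have hinl : (fromBlocks A 0 0 B *ᵥ x) ∘ Sum.inl = A *ᵥ (x ∘ Sum.inl) := by
      ext i; simp [fromBlocks_mulVec]
    have hinr : (fromBlocks A 0 0 B *ᵥ x) ∘ Sum.inr = B *ᵥ (x ∘ Sum.inr) := by
      ext i; simp [fromBlocks_mulVec]
    have hA := pow_le_pow_left₀ (norm_nonneg _) ((l2_opNorm_mulVec_toLp A (x ∘ Sum.inl)).trans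
      (mul_le_mul_of_nonneg_right (le_max_left ‖A‖ ‖B‖) (norm_nonneg _))) 2
    have hB := pow_le_pow_left₀ (norm_nonneg _) ((l2_opNorm_mulVec_toLp B (x ∘ Sum.inr)).trans
      (mul_le_mul_of_nonneg_right (le_max_right ‖A‖ ‖B‖) (norm_nonneg _))) 2
    rw [EuclideanSpace.norm_toLp_sum_sq, EuclideanSpace.norm_toLp_sum_sq x, hinl, hinr]
    rw [mul_pow] at hA hB
    linarith
  · have hA : (fromBlocks A 0 0 B).submatrix Sum.inl Sum.inl = A := toBlocks_fromBlocks₁₁ A 0 0 B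
    simpa [hA] using l2_opNorm_submatrix_le (fromBlocks A 0 0 B) Sum.inl_injective
      Sum.inl_injective
  · have hB : (fromBlocks A 0 0 B).submatrix Sum.inr Sum.inr = B := toBlocks_fromBlocks₂₂ A 0 0 B
    simpa [hB] using l2_opNorm_submatrix_le (fromBlocks A 0 0 B) Sum.inr_injective
      Sum.inr_injective

theorem eq_smul_one_of_forall_star_dotProduct_mulVec {n : Type*} [Fintype n] [DecidableEq n]
    (N : Matrix n n ℂ) (c : ℂ)
    (h : ∀ v : n → ℂ, star v ⬝ᵥ v = 1 → star v ⬝ᵥ N *ᵥ v = c) : N = c • 1 := by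
  have hquad : ∀ v : n → ℂ, star v ⬝ᵥ (N - c • 1) *ᵥ v = 0 := by
    intro v
    rcases eq_or_ne v 0 with rfl | hv
    · simp
    obtain ⟨htpos, him⟩ := Complex.pos_iff.mp (dotProduct_star_self_pos_iff.mpr hv)
    set t := (star v ⬝ᵥ v).re
    have ht : star v ⬝ᵥ v = t := Complex.ext rfl (by simp [← him])
    set u : ℂ := (((√t)⁻¹ : ℝ) : ℂ)
    have hu : u * star u * t = 1 := by
      have hsq : ((√t)⁻¹ * (√t)⁻¹ * t : ℝ) = 1 := by
        rw [← mul_inv, Real.mul_self_sqrt htpos.le, inv_mul_cancel₀ htpos.ne']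
      simpa [u, Complex.conj_ofReal] using congrArg ((↑) : ℝ → ℂ) hsq
    have hq : u * star u * (star v ⬝ᵥ N *ᵥ v) = c := by
      simpa [mulVec_smul, smul_dotProduct, dotProduct_smul, mul_assoc, mul_left_comm]
        using h (u • v) (by simpa [smul_dotProduct, dotProduct_smul, ht, mul_assoc] using hu)
    simp only [sub_mulVec, smul_mulVec, one_mulVec, dotProduct_sub, dotProduct_smul, ht,
      smul_eq_mul]
    linear_combination (-(star v ⬝ᵥ N *ᵥ v)) * hu + (t : ℂ) * hq
  rw [← sub_eq_zero, ← toEuclideanLin.map_eq_zero_iff, ← inner_map_self_eq_zero]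
  intro x
  rw [EuclideanSpace.inner_eq_star_dotProduct, dotProduct_comm]
  simp only [toLpLin_apply, WithLp.ofLp_toLp]
  rw [star_dotProduct, hquad, star_zero]

end Matrix

section BlockMatrices

open scoped Matrix.Norms.L2Operator Kronecker

theorem opNorm_eq_norm {I J : Type*} [Fintype I] [Fintype J] [DecidableEq I] [DecidableEq J]
    (M : Matrix I J ℂ) : opNorm M = ‖M‖ := rfl

variable {r m k : ℕ}

def prodFinAddEquiv (r m k : ℕ) : Fin r × Fin (m + k) ≃ Fin r × Fin m ⊕ Fin r × Fin k :=
  (Equiv.prodCongr (Equiv.refl _) finSumFinEquiv.symm).trans (Equiv.prodSumDistrib _ _ _)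

theorem dsumAmp_eq_submatrix_fromBlocks (A : Matrix (Fin r × Fin m) (Fin r × Fin m) ℂ)
    (B : Matrix (Fin r × Fin k) (Fin r × Fin k) ℂ) :
    dsumAmp A B =
      (fromBlocks A 0 0 B).submatrix (prodFinAddEquiv r m k) (prodFinAddEquiv r m k) := by
  ext ⟨i, p⟩ ⟨j, q⟩
  rcases hp : finSumFinEquiv.symm p with a | a <;> rcases hq : finSumFinEquiv.symm q with b | b <;>
    simp [dsumAmp, prodFinAddEquiv, hp, hq]

theorem opNorm_dsumAmp (A : Matrix (Fin r × Fin m) (Fin r × Fin m) ℂ)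
    (B : Matrix (Fin r × Fin k) (Fin r × Fin k) ℂ) :
    opNorm (dsumAmp A B) = max (opNorm A) (opNorm B) := by
  simp only [opNorm_eq_norm, dsumAmp_eq_submatrix_fromBlocks, l2_opNorm_submatrix_equiv,
    l2_opNorm_fromBlocks_zero]

theorem dsumAmp_sub (A A' : Matrix (Fin r × Fin m) (Fin r × Fin m) ℂ)
    (B B' : Matrix (Fin r × Fin k) (Fin r × Fin k) ℂ) :
    dsumAmp A B - dsumAmp A' B' = dsumAmp (A - A') (B - B') := by
  ext ⟨i, p⟩ ⟨j, q⟩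
  rcases hp : finSumFinEquiv.symm p with a | a <;> rcases hq : finSumFinEquiv.symm q with b | b <;>
    simp [dsumAmp, hp, hq]

theorem ampMul_eq_kronecker_mul (α : CMat k m) (M : Matrix (Fin r × Fin m) (Fin r × Fin m) ℂ)
    (β : CMat m k) : ampMul α M β = ((1 : CMat r r) ⊗ₖ α) * M * ((1 : CMat r r) ⊗ₖ β) := by
  ext ⟨i, a⟩ ⟨j, b⟩
  simp [ampMul, mul_apply, Fintype.sum_prod_type, one_apply, ite_mul, Finset.sum_mul, mul_assoc]
  exact Finset.sum_comm

theorem opNorm_ampMul_le (α : CMat k m) (M : Matrix (Fin r × Fin m) (Fin r × Fin m) ℂ)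
    (β : CMat m k) : opNorm (ampMul α M β) ≤ opNorm α * opNorm M * opNorm β := by
  simp only [opNorm_eq_norm, ampMul_eq_kronecker_mul]
  calc _ ≤ ‖(1 : CMat r r) ⊗ₖ α‖ * ‖M‖ * ‖(1 : CMat r r) ⊗ₖ β‖ :=
        (l2_opNorm_mul _ _).trans (by gcongr; exact l2_opNorm_mul _ _)
    _ ≤ ‖α‖ * ‖M‖ * ‖β‖ := by
        gcongr
        exacts [l2_opNorm_one_kronecker_le α, l2_opNorm_one_kronecker_le β]

theorem ampMul_sub (α : CMat k m) (A B : Matrix (Fin r × Fin m) (Fin r × Fin m) ℂ)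
    (β : CMat m k) : ampMul α A β - ampMul α B β = ampMul α (A - B) β := by
  simp only [ampMul_eq_kronecker_mul, Matrix.mul_sub, Matrix.sub_mul]

end BlockMatrices

section States

open scoped Kronecker

theorem MOUS.stateConj_mem (S : MOUS V) {m n : ℕ} {γ : CMat m n} (hγ : γᴴ * γ = 1)
    {φ : V →ₗ[ℂ] CMat m m} (hφ : φ ∈ S.CS m) : stateConj γ φ ∈ S.CS n := by
  refine ⟨?_, fun r a ha => ?_⟩
  · change γᴴ * φ S.unit * γ = 1
    rw [hφ.1, Matrix.mul_one, hγ]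
  · have hpair : pairing (stateConj γ φ) a =
        ((1 : CMat r r) ⊗ₖ γ)ᴴ * pairing φ a * ((1 : CMat r r) ⊗ₖ γ) := by
      ext ⟨i, u⟩ ⟨j, v⟩
      simp [pairing, stateConj, mapCMul, mul_apply, Fintype.sum_prod_type, one_apply, ite_mul,
        Finset.sum_mul, apply_ite (starRingEnd ℂ)]
    rw [hpair]
    exact (hφ.2 r a ha).conjTranspose_mul_mul_same _

theorem MatAffine.F_stateConj {S : MOUS V} {k : ℕ} (F : MatAffine S k) {m n : ℕ}
    {γ : CMat m n} (hγ : γᴴ * γ = 1) {φ : V →ₗ[ℂ] CMat m m} (hφ : φ ∈ S.CS m) :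
    F.F n (stateConj γ φ) = ampConj γ (F.F m φ) := by
  simpa using F.affine n 1 (fun _ => m) (fun _ => φ) (fun _ => γ) (fun _ => hφ) (by simpa using hγ)

theorem eq_scalarAmp_of_forall_ampConj {r k : ℕ} (M : Matrix (Fin r × Fin k) (Fin r × Fin k) ℂ)
    (C : Matrix (Fin 1 × Fin k) (Fin 1 × Fin k) ℂ)
    (h : ∀ ξ : CMat r 1, ξᴴ * ξ = 1 → ampConj ξ M = C) :
    M = scalarAmp r (Matrix.of fun a b => C (0, a) (0, b)) := by
  have hblock : ∀ a b, (Matrix.of fun i j => M (i, a) (j, b)) = C (0, a) (0, b) • 1 := by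
    intro a b
    refine eq_smul_one_of_forall_star_dotProduct_mulVec _ _ fun v hv => ?_
    have hξ : (replicateCol (Fin 1) v)ᴴ * replicateCol (Fin 1) v = 1 := by
      ext i j
      obtain rfl := Subsingleton.elim i j
      simpa [mul_apply, dotProduct] using hv
    rw [← h _ hξ]
    simp [ampConj, dotProduct, mulVec, Finset.mul_sum, mul_assoc]
  ext ⟨i, a⟩ ⟨j, b⟩
  simpa [scalarAmp, one_apply, eq_comm] using congrFun₂ (hblock a b) i j

theorem MatAffine.exists_scalarAmp_of_forall_eq {S : MOUS V} {k : ℕ} (F : MatAffine S k)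
    (hF : ∀ r (φ ψ : V →ₗ[ℂ] CMat r r), φ ∈ S.CS r → ψ ∈ S.CS r → F.F r φ = F.F r ψ) :
    ∃ c : CMat k k, ∀ r (φ : V →ₗ[ℂ] CMat r r), φ ∈ S.CS r → F.F r φ = scalarAmp r c := by
  classical
  let C := if h : (S.CS 1).Nonempty then F.F 1 h.some else 0
  refine ⟨Matrix.of fun a b => C (0, a) (0, b), fun r φ hφ =>
    eq_scalarAmp_of_forall_ampConj _ _ fun ξ hξ => ?_⟩
  have hξφ := S.stateConj_mem hξ hφ
  have hne : (S.CS 1).Nonempty := ⟨_, hξφ⟩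
  rw [← F.F_stateConj hξ hφ, show C = F.F 1 hne.some from dif_pos hne]
  exact hF 1 _ _ hξφ hne.some_mem

end States

theorem dTopE_eq_dTop {X : Type*} {K : Set X} {d : X → X → ℝ} {e : X → X → ℝ≥0∞}
    (hd : ∀ x y, x ∈ K → y ∈ K → 0 ≤ d x y)
    (he : ∀ x y, x ∈ K → y ∈ K → e x y = ENNReal.ofReal (d x y)) :
    dTopE K e = dTop K d := by
  refine le_antisymm ?_ ?_
  · rw [dTop, TopologicalSpace.le_generateFrom_iff_subset_isOpen]
    rintro _ ⟨x, ε, hε, rfl⟩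
    refine TopologicalSpace.isOpen_generateFrom_of_mem
      ⟨x, ENNReal.ofReal ε, ENNReal.ofReal_pos.mpr hε, ?_⟩
    ext y
    simp [he x y x.2 y.2, ENNReal.ofReal_lt_ofReal_iff hε]
  · rw [dTopE, TopologicalSpace.le_generateFrom_iff_subset_isOpen]
    rintro _ ⟨x, ε, hε, rfl⟩
    rcases eq_or_ne ε ⊤ with rfl | hε'
    · have hball : {y : K | e x y < ⊤} = Set.univ := by
        ext y
        simp [he x y x.2 y.2]
      exact hball ▸ @isOpen_univ _ (dTop K d)
    · refine TopologicalSpace.isOpen_generateFrom_of_mem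
        ⟨x, ε.toReal, ENNReal.toReal_pos hε.ne' hε', ?_⟩
      ext y
      simp [he x y x.2 y.2, ENNReal.ofReal_lt_iff_lt_toReal (hd x y x.2 y.2) hε']

section LipschitzGauge

open scoped Matrix.Norms.L2Operator

theorem MatMetric.D_pos {S : MOUS V} (Dm : MatMetric S) {r : ℕ} {φ ψ : V →ₗ[ℂ] CMat r r}
    (hφ : φ ∈ S.CS r) (hψ : ψ ∈ S.CS r) (hne : φ ≠ ψ) : 0 < Dm.D r φ ψ :=
  (Dm.nonneg r φ ψ hφ hψ).lt_of_ne fun h => hne ((Dm.eq_zero_iff r φ ψ hφ hψ).mp h.symm)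

variable {S : MOUS V} {Dm : MatMetric S} {k : ℕ}

theorem le_LD (F : MatAffine S k) {r : ℕ} {φ ψ : V →ₗ[ℂ] CMat r r}
    (hφ : φ ∈ S.CS r) (hψ : ψ ∈ S.CS r) (hne : φ ≠ ψ) :
    ENNReal.ofReal (opNorm (F.F r φ - F.F r ψ)) / ENNReal.ofReal (Dm.D r φ ψ) ≤ LD S Dm F :=
  le_iSup_of_le r <| le_iSup_of_le φ <| le_iSup_of_le hφ <| le_iSup_of_le ψ <|
    le_iSup_of_le hψ <| le_iSup_of_le hne le_rfl

theorem LD_le {F : MatAffine S k} {x : ℝ≥0∞}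
    (h : ∀ r (φ ψ : V →ₗ[ℂ] CMat r r), φ ∈ S.CS r → ψ ∈ S.CS r → φ ≠ ψ →
      ENNReal.ofReal (opNorm (F.F r φ - F.F r ψ)) / ENNReal.ofReal (Dm.D r φ ψ) ≤ x) :
    LD S Dm F ≤ x :=
  iSup_le fun r => iSup_le fun φ => iSup_le fun hφ => iSup_le fun ψ => iSup_le fun hψ =>
    iSup_le fun hne => h r φ ψ hφ hψ hne

theorem LD_le_ofReal_iff {F : MatAffine S k} {t : ℝ} (ht : 0 ≤ t) :
    LD S Dm F ≤ ENNReal.ofReal t ↔ ∀ r (φ ψ : V →ₗ[ℂ] CMat r r), φ ∈ S.CS r → ψ ∈ S.CS r →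
      opNorm (F.F r φ - F.F r ψ) ≤ t * Dm.D r φ ψ := by
  refine ⟨fun h r φ ψ hφ hψ => ?_, fun h => LD_le fun r φ ψ hφ hψ hne => ?_⟩
  · rcases eq_or_ne φ ψ with rfl | hne
    · simp [opNorm_eq_norm, (Dm.eq_zero_iff r φ φ hφ hφ).mpr rfl]
    have hD := Dm.D_pos hφ hψ hne
    have := (le_LD F hφ hψ hne).trans h
    rwa [← ENNReal.ofReal_div_of_pos hD, ENNReal.ofReal_le_ofReal_iff ht, div_le_iff₀ hD] at this
  · have hD := Dm.D_pos hφ hψ hne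
    rw [← ENNReal.ofReal_div_of_pos hD]
    exact ENNReal.ofReal_le_ofReal ((div_le_iff₀ hD).mpr (h r φ ψ hφ hψ))

theorem LD_eq_zero_iff_forall_eq {F : MatAffine S k} :
    LD S Dm F = 0 ↔ ∀ r (φ ψ : V →ₗ[ℂ] CMat r r), φ ∈ S.CS r → ψ ∈ S.CS r →
      F.F r φ = F.F r ψ := by
  rw [← nonpos_iff_eq_zero, ← ENNReal.ofReal_zero, LD_le_ofReal_iff le_rfl]
  simp only [zero_mul, opNorm_eq_norm, norm_le_zero_iff, sub_eq_zero]

theorem LD_le_ofReal_mul {k' : ℕ} {F : MatAffine S k} {H : MatAffine S k'} {K : ℝ} (hK : 0 ≤ K)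
    (h : ∀ r (φ ψ : V →ₗ[ℂ] CMat r r), φ ∈ S.CS r → ψ ∈ S.CS r →
      opNorm (H.F r φ - H.F r ψ) ≤ K * opNorm (F.F r φ - F.F r ψ)) :
    LD S Dm H ≤ ENNReal.ofReal K * LD S Dm F :=
  LD_le fun r φ ψ hφ hψ hne => calc
    _ ≤ ENNReal.ofReal (K * opNorm (F.F r φ - F.F r ψ)) / ENNReal.ofReal (Dm.D r φ ψ) := by
        gcongr
        exact h r φ ψ hφ hψ
    _ = ENNReal.ofReal K *
          (ENNReal.ofReal (opNorm (F.F r φ - F.F r ψ)) / ENNReal.ofReal (Dm.D r φ ψ)) := by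
        rw [ENNReal.ofReal_mul hK, mul_div_assoc]
    _ ≤ _ := by
        gcongr
        exact le_LD F hφ hψ hne

theorem LD_eq_ofReal_mul {F H : MatAffine S k} {K : ℝ} (hK : 0 ≤ K)
    (h : ∀ r (φ ψ : V →ₗ[ℂ] CMat r r), φ ∈ S.CS r → ψ ∈ S.CS r →
      opNorm (H.F r φ - H.F r ψ) = K * opNorm (F.F r φ - F.F r ψ)) :
    LD S Dm H = ENNReal.ofReal K * LD S Dm F := by
  simp only [LD, ENNReal.mul_iSup]
  refine iSup_congr fun r => iSup_congr fun φ => iSup_congr fun hφ => iSup_congr fun ψ =>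
    iSup_congr fun hψ => iSup_congr fun _ => ?_
  rw [h r φ ψ hφ hψ, ENNReal.ofReal_mul hK, mul_div_assoc]

theorem LD_le_add {F G H : MatAffine S k}
    (hH : ∀ r (φ : V →ₗ[ℂ] CMat r r), φ ∈ S.CS r → H.F r φ = F.F r φ + G.F r φ) :
    LD S Dm H ≤ LD S Dm F + LD S Dm G :=
  LD_le fun r φ ψ hφ hψ hne => calc
    _ ≤ (ENNReal.ofReal (opNorm (F.F r φ - F.F r ψ)) +
          ENNReal.ofReal (opNorm (G.F r φ - G.F r ψ))) / ENNReal.ofReal (Dm.D r φ ψ) := by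
        gcongr
        simp only [opNorm_eq_norm]
        rw [← ENNReal.ofReal_add (norm_nonneg _) (norm_nonneg _), hH r φ hφ, hH r ψ hψ,
          add_sub_add_comm]
        exact ENNReal.ofReal_le_ofReal (norm_add_le _ _)
    _ ≤ _ := by
        rw [ENNReal.add_div]
        gcongr <;> exact le_LD _ hφ hψ hne

theorem LD_smul {c : ℂ} {F H : MatAffine S k}
    (hH : ∀ r (φ : V →ₗ[ℂ] CMat r r), φ ∈ S.CS r → H.F r φ = c • F.F r φ) :
    LD S Dm H = (‖c‖₊ : ℝ≥0∞) * LD S Dm F := by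
  rw [← enorm_eq_nnnorm, ← ofReal_norm]
  refine LD_eq_ofReal_mul (norm_nonneg c) fun r φ ψ hφ hψ => ?_
  rw [hH r φ hφ, hH r ψ hψ, ← smul_sub, opNorm_eq_norm, opNorm_eq_norm, norm_smul]

theorem LD_eq_zero_iff {F : MatAffine S k} :
    LD S Dm F = 0 ↔
      ∃ c : CMat k k, ∀ r (φ : V →ₗ[ℂ] CMat r r), φ ∈ S.CS r → F.F r φ = scalarAmp r c := by
  rw [LD_eq_zero_iff_forall_eq]
  exact ⟨F.exists_scalarAmp_of_forall_eq, fun ⟨c, hc⟩ r φ ψ hφ hψ => by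
    rw [hc r φ hφ, hc r ψ hψ]⟩

theorem LD_dsumAmp {m : ℕ} {F : MatAffine S m} {G : MatAffine S k} {H : MatAffine S (m + k)}
    (hH : ∀ r (φ : V →ₗ[ℂ] CMat r r), φ ∈ S.CS r → H.F r φ = dsumAmp (F.F r φ) (G.F r φ)) :
    LD S Dm H = max (LD S Dm F) (LD S Dm G) := by
  have hdiff : ∀ r (φ ψ : V →ₗ[ℂ] CMat r r), φ ∈ S.CS r → ψ ∈ S.CS r →
      opNorm (H.F r φ - H.F r ψ) =
        max (opNorm (F.F r φ - F.F r ψ)) (opNorm (G.F r φ - G.F r ψ)) := by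
    intro r φ ψ hφ hψ
    rw [hH r φ hφ, hH r ψ hψ, dsumAmp_sub, opNorm_dsumAmp]
  refine le_antisymm (LD_le fun r φ ψ hφ hψ hne => ?_) (max_le ?_ ?_)
  · rw [hdiff r φ ψ hφ hψ]
    rcases le_total (opNorm (F.F r φ - F.F r ψ)) (opNorm (G.F r φ - G.F r ψ)) with hFG | hFG
    · rw [max_eq_right hFG]
      exact (le_LD G hφ hψ hne).trans (le_max_right _ _)
    · rw [max_eq_left hFG]
      exact (le_LD F hφ hψ hne).trans (le_max_left _ _)
  · simpa using LD_le_ofReal_mul (S := S) (Dm := Dm) (F := H) zero_le_one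
      fun r φ ψ hφ hψ => by rw [one_mul, hdiff r φ ψ hφ hψ]; exact le_max_left _ _
  · simpa using LD_le_ofReal_mul (S := S) (Dm := Dm) (F := H) zero_le_one
      fun r φ ψ hφ hψ => by rw [one_mul, hdiff r φ ψ hφ hψ]; exact le_max_right _ _

theorem LD_ampMul_le {m : ℕ} (α : CMat k m) (β : CMat m k) {F : MatAffine S m}
    {H : MatAffine S k}
    (hH : ∀ r (φ : V →ₗ[ℂ] CMat r r), φ ∈ S.CS r → H.F r φ = ampMul α (F.F r φ) β) :
    LD S Dm H ≤ ENNReal.ofReal (opNorm α) * LD S Dm F * ENNReal.ofReal (opNorm β) := by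
  have hα : 0 ≤ opNorm α := norm_nonneg α
  have hβ : 0 ≤ opNorm β := norm_nonneg β
  rw [mul_right_comm, ← ENNReal.ofReal_mul hα]
  refine LD_le_ofReal_mul (mul_nonneg hα hβ) fun r φ ψ hφ hψ => ?_
  rw [hH r φ hφ, hH r ψ hψ, ampMul_sub, mul_right_comm]
  exact opNorm_ampMul_le α _ β

theorem LD_conjTranspose {F H : MatAffine S k}
    (hH : ∀ r (φ : V →ₗ[ℂ] CMat r r), φ ∈ S.CS r → H.F r φ = (F.F r φ)ᴴ) :
    LD S Dm H = LD S Dm F := by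
  simpa using LD_eq_ofReal_mul (S := S) (Dm := Dm) (F := F) (H := H) zero_le_one
    fun r φ ψ hφ hψ => by
      rw [hH r φ hφ, hH r ψ hψ, one_mul, ← conjTranspose_sub, opNorm_eq_norm, opNorm_eq_norm,
        l2_opNorm_conjTranspose]

theorem LD_le_of_forall_approx {F : MatAffine S k} {t : ℝ} (ht : 0 ≤ t)
    (hF : ∀ ε : ℝ, 0 < ε → ∃ G : MatAffine S k, LD S Dm G ≤ ENNReal.ofReal t ∧
      ∀ r (φ : V →ₗ[ℂ] CMat r r), φ ∈ S.CS r → opNorm (F.F r φ - G.F r φ) ≤ ε) :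
    LD S Dm F ≤ ENNReal.ofReal t := by
  refine (LD_le_ofReal_iff ht).mpr fun r φ ψ hφ hψ => le_of_forall_pos_le_add fun ε hε => ?_
  obtain ⟨G, hG, hFG⟩ := hF (ε / 2) (half_pos hε)
  have hGφψ := (LD_le_ofReal_iff ht).mp hG r φ ψ hφ hψ
  have hFGφ := hFG r φ hφ
  have hFGψ := hFG r ψ hψ
  simp only [opNorm_eq_norm] at hGφψ hFGφ hFGψ ⊢
  have h1 := norm_sub_le_norm_sub_add_norm_sub (F.F r φ) (G.F r φ) (F.F r ψ)
  have h2 := norm_sub_le_norm_sub_add_norm_sub (G.F r φ) (G.F r ψ) (F.F r ψ)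
  rw [norm_sub_rev (G.F r ψ)] at h2
  linarith

end LipschitzGauge

theorem LD_lipNorm_of_Lc_eq_general (S : MOUS V) (Dm : MatMetric S)
    (htop : ∀ n, dTop (S.CS n) (Dm.D n) = bwTop S n)
    (hc : ∀ n (φ ψ : V →ₗ[ℂ] CMat n n), φ ∈ S.CS n → ψ ∈ S.CS n →
      DD S Dm n φ ψ = ENNReal.ofReal (Dm.D n φ ψ)) :
    IsLipNormOnK S Dm :=
  ⟨fun _ _ _ _ => LD_le_add, fun _ _ _ _ => LD_smul, fun _ _ => LD_eq_zero_iff,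
    fun _ _ _ _ _ => LD_dsumAmp, fun _ _ α β _ _ => LD_ampMul_le α β,
    fun _ _ _ => LD_conjTranspose, fun _ _ ht _ => LD_le_of_forall_approx ht.le,
    fun n => (dTopE_eq_dTop (Dm.nonneg n) (hc n)).trans (htop n)⟩

/-- if the matrix metric `D` on `CS(V)` is convex, midpoint balanced and midpoint
concave, the `D`-topology agrees with the BW-topology, and `L^c_{Dₙ}(φ - ψ) = Dₙ(φ, ψ)` for
all matrix states, then `L_D = (L_{Dₙ})` is a lower semicontinuous matrix Lip-norm on the
matrix order unit space `(K₁, I)`. -/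
theorem LD_lipNorm_of_Lc_eq (S : MOUS V) (Dm : MatMetric S)
    (h1 : MMConvex S Dm) (h2 : MMBalanced S Dm) (h3 : MMConcave S Dm)
    (htop : ∀ n, dTop (S.CS n) (Dm.D n) = bwTop S n)
    (hc : ∀ n (φ ψ : V →ₗ[ℂ] CMat n n), φ ∈ S.CS n → ψ ∈ S.CS n →
      DD S Dm n φ ψ = ENNReal.ofReal (Dm.D n φ ψ)) :
    IsLipNormOnK S Dm :=
  LD_lipNorm_of_Lc_eq_general S Dm htop hc
end
end
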